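/- arXiv:2205.09092 — 16 statements merged into one kernel-verified Lean document; each statement's English description precedes it below -/
import Mathlib

section
/- Every profile of linear orders that is single-peaked with respect to some axis has a weak Condorcet winner; in fact, the top-ranked alternative of the median voter (when voters are sorted by the position of their peaks on the axis) is a weak Condorcet winner. -/
/-- A vote (linear order) over a finite set `A`, encoded as a ranking:
`v a < v b` means `a` is strictly preferred to `b`. -/
abbrev Vote (A : Type*) [Fintype A] := A ≃ Fin (Fintype.card A)

variable {A : Type*} [Fintype A] [DecidableEq A] [Nonempty A]

/-- The top-ranked (most preferred) alternative of a vote. -/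
def top (v : Vote A) : A := v.symm ⟨0, Fintype.card_pos⟩

/-- `v` is single-peaked on the axis `ax`: for alternatives `a`, `b` with
`top v ◁ b ◁ a` or `a ◁ b ◁ top v`, the vote ranks `b` above `a`. -/
def SinglePeakedOn (ax v : Vote A) : Prop :=
  ∀ a b : A,
    (ax (top v) < ax b ∧ ax b < ax a) ∨ (ax a < ax b ∧ ax b < ax (top v)) →
    v b < v a

/-- `c` is a weak Condorcet winner: for every other alternative `b`, at least
as many voters prefer `c` to `b` as prefer `b` to `c`. -/
def WeakCondorcetWinner {n : ℕ} (P : Fin n → Vote A) (c : A) : Prop :=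
  ∀ b : A, b ≠ c →
    (Finset.univ.filter fun i => P i b < P i c).card ≤
    (Finset.univ.filter fun i => P i c < P i b).card

/-- The top alternative is strictly preferred to any other alternative. -/
lemma top_lt {v : Vote A} {x : A} (hx : x ≠ top v) : v (top v) < v x := by
  have h0 : v (top v) = ⟨0, Fintype.card_pos⟩ := by simp [top]
  have hne : v x ≠ v (top v) := fun h => hx (v.injective h)
  rw [h0] at hne ⊢
  have hvne : (v x).val ≠ 0 := by
    intro h
    exact hne (Fin.ext (by simp [h]))
  rw [Fin.lt_def]
  simpa using Nat.pos_of_ne_zero hvne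

/-- Median voter theorem: a single-peaked profile has a weak Condorcet winner;
in fact, the top alternative of the median voter (when the voters are sorted
by the position of their peaks on the axis) is a weak Condorcet winner. -/
theorem median_voter_theorem {n : ℕ} (hn : 0 < n) (P : Fin n → Vote A) (ax : Vote A)
    (hsp : ∀ i, SinglePeakedOn ax (P i)) (σ : Equiv.Perm (Fin n))
    (hsort : Monotone fun i => ax (top (P (σ i)))) :
    WeakCondorcetWinner P (top (P (σ ⟨n / 2, Nat.div_lt_self hn one_lt_two⟩))) ∧
    ∃ c : A, WeakCondorcetWinner P c := by
  set mid : Fin n := ⟨n / 2, Nat.div_lt_self hn one_lt_two⟩ with hmid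
  set c := top (P (σ mid)) with hc
  have key : WeakCondorcetWinner P c := by
    intro b hb
    -- if a voter's peak is on the far side of `c` from `b`, the voter prefers `c` to `b`
    have hpref : ∀ j : Fin n,
        (ax (top (P j)) ≤ ax c ∧ ax c < ax b) ∨ (ax b < ax c ∧ ax c ≤ ax (top (P j))) →
        P j c < P j b := by
      intro j h
      by_cases htc : top (P j) = c
      · rw [← htc]
        exact top_lt (by rw [htc]; exact hb)
      · have haxne : ax (top (P j)) ≠ ax c := fun h => htc (ax.injective h)
        rcases h with ⟨h1, h2⟩ | ⟨h1, h2⟩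
        · exact hsp j b c (Or.inl ⟨lt_of_le_of_ne h1 haxne, h2⟩)
        · exact hsp j b c (Or.inr ⟨h1, lt_of_le_of_ne h2 (Ne.symm haxne)⟩)
    set S := Finset.univ.filter (fun i => P i c < P i b) with hS
    have heq : (Finset.univ.filter fun i => P i b < P i c)
        = Finset.univ.filter (fun i => ¬ (P i c < P i b)) := by
      apply Finset.filter_congr
      intro i _
      have hne : P i b ≠ P i c := fun h => hb ((P i).injective h)
      constructor
      · exact fun h => not_lt.mpr h.le
      · exact fun h => lt_of_le_of_ne (not_lt.mp h) hne
    have hsum : S.card + (Finset.univ.filter (fun i => ¬ (P i c < P i b))).card = n := by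
      rw [Finset.card_filter_add_card_filter_not]
      simp
    have hcard : S.card ≥ n - n / 2 := by
      rcases lt_trichotomy (ax b) (ax c) with hlt | heqx | hgt
      · -- b is left of c: all voters with peak at or right of c prefer c
        have hsub : (Finset.Ici mid).image σ ⊆ S := by
          intro i hi
          simp only [Finset.mem_image, Finset.mem_Ici] at hi
          obtain ⟨k, hk, rfl⟩ := hi
          simp only [hS, Finset.mem_filter, Finset.mem_univ, true_and]
          exact hpref (σ k) (Or.inr ⟨hlt, hsort hk⟩)
        have := Finset.card_le_card hsub
        rwa [Finset.card_image_of_injective _ σ.injective, Fin.card_Ici] at this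
      · exact absurd (ax.injective heqx) hb
      · -- b is right of c: all voters with peak at or left of c prefer c
        have hsub : (Finset.Iic mid).image σ ⊆ S := by
          intro i hi
          simp only [Finset.mem_image, Finset.mem_Iic] at hi
          obtain ⟨k, hk, rfl⟩ := hi
          simp only [hS, Finset.mem_filter, Finset.mem_univ, true_and]
          exact hpref (σ k) (Or.inl ⟨hsort hk, hgt⟩)
        have h1 := Finset.card_le_card hsub
        rw [Finset.card_image_of_injective _ σ.injective, Fin.card_Iic] at h1
        have : (mid : ℕ) = n / 2 := rfl
        omega
    rw [heq]
    omega
  exact ⟨key, c, key⟩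
end

section
/- If a profile with an odd number of voters is single-peaked, then its strict majority relation is transitive (in fact, a linear order). -/
variable {A : Type*} [Fintype A] [DecidableEq A]

/-- `v` has no valley with respect to the axis `ax`: for no `a ◁ b ◁ c`
does the vote rank both `a` and `c` above `b`. -/
def NoValley (ax v : Vote A) : Prop :=
  ∀ a b c : A, ax a < ax b → ax b < ax c → ¬(v a < v b ∧ v c < v b)

/-- The strict majority relation: `a` beats `b` if strictly more voters
rank `a` above `b` than `b` above `a`. -/
def strictMaj {n : ℕ} (P : Fin n → Vote A) (a b : A) : Prop :=
  (Finset.univ.filter fun i => P i b < P i a).card <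
  (Finset.univ.filter fun i => P i a < P i b).card

private lemma count_partition {n : ℕ} (P : Fin n → Vote A) {a b : A} (hab : a ≠ b) :
    (Finset.univ.filter fun i => P i a < P i b).card +
    (Finset.univ.filter fun i => P i b < P i a).card = n := by
  have heq : (Finset.univ.filter fun i => ¬ P i a < P i b)
      = (Finset.univ.filter fun i => P i b < P i a) := by
    apply Finset.filter_congr
    intro i _
    have hne : P i a ≠ P i b := fun h => hab ((P i).injective h)
    simp only [not_lt]
    constructor
    · intro h; exact lt_of_le_of_ne h hne.symm
    · intro h; exact h.le
  have := Finset.card_filter_add_card_filter_not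
    (s := (Finset.univ : Finset (Fin n))) (p := fun i => P i a < P i b)
  rw [Finset.card_univ, Fintype.card_fin, heq] at this
  exact this

private lemma maj_of_subset {n : ℕ} (P : Fin n → Vote A) {x y u v : A}
    (h : ∀ i, P i x < P i y → P i u < P i v)
    (hc : n < 2 * (Finset.univ.filter fun i => P i x < P i y).card)
    (huv : u ≠ v) : strictMaj P u v := by
  have hsub : (Finset.univ.filter fun i => P i x < P i y) ⊆
      (Finset.univ.filter fun i => P i u < P i v) := by
    intro i hi
    simp only [Finset.mem_filter, Finset.mem_univ, true_and] at *
    exact h i hi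
  have h1 := Finset.card_le_card hsub
  have h2 := count_partition P huv
  unfold strictMaj
  omega

/-- If a profile with an odd number of voters is single-peaked, then its strict
majority relation is transitive, and in fact a linear (strict total) order. -/
theorem strictMaj_transitive_of_singlePeaked_odd {n : ℕ} (hodd : Odd n)
    (P : Fin n → Vote A) (hsp : ∃ ax : Vote A, ∀ i, NoValley ax (P i)) :
    Transitive (strictMaj P) ∧
    ∀ a b : A, a ≠ b → strictMaj P a b ∨ strictMaj P b a := by
  obtain ⟨ax, hax⟩ := hsp
  obtain ⟨k, hk⟩ := hodd
  -- the axis-middle alternative is never ranked worst among three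
  have key : ∀ {x m z : A}, ax x < ax m → ax m < ax z →
      ∀ i, P i m < P i x ∨ P i m < P i z := by
    intro x m z h1 h2 i
    have hnv := hax i x m z h1 h2
    have hxm : x ≠ m := fun h => absurd (congrArg ax h) (ne_of_lt h1)
    have hmz : m ≠ z := fun h => absurd (congrArg ax h) (ne_of_lt h2)
    by_contra hcon
    push_neg at hcon
    exact hnv ⟨lt_of_le_of_ne hcon.1 (fun h => hxm ((P i).injective h)),
               lt_of_le_of_ne hcon.2 (fun h => hmz ((P i).injective h).symm)⟩
  have total : ∀ a b : A, a ≠ b → strictMaj P a b ∨ strictMaj P b a := by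
    intro a b hab
    have h := count_partition P hab
    unfold strictMaj
    rcases Nat.lt_trichotomy ((Finset.univ.filter fun i => P i a < P i b).card)
      ((Finset.univ.filter fun i => P i b < P i a).card) with h'|h'|h'
    · exact Or.inr h'
    · omega
    · exact Or.inl h'
  refine ⟨?_, total⟩
  intro a b c hab hbc
  have hab_ne : a ≠ b := by rintro rfl; exact lt_irrefl _ hab
  have hbc_ne : b ≠ c := by rintro rfl; exact lt_irrefl _ hbc
  by_cases hac : a = c
  · subst hac
    exact absurd hbc (fun h => lt_asymm hab h)
  -- suppose, for contradiction, ¬ strictMaj a c; then strictMaj c a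
  by_contra hnac
  have hca : strictMaj P c a := (total a c hac).resolve_left hnac
  have hab2 : n < 2 * (Finset.univ.filter fun i => P i a < P i b).card := by
    have := count_partition P hab_ne; unfold strictMaj at hab; omega
  have hbc2 : n < 2 * (Finset.univ.filter fun i => P i b < P i c).card := by
    have := count_partition P hbc_ne; unfold strictMaj at hbc; omega
  have hca2 : n < 2 * (Finset.univ.filter fun i => P i c < P i a).card := by
    have := count_partition P (Ne.symm hac); unfold strictMaj at hca; omega
  -- three finishers depending on which of a, b, c is the axis-middle
  have hmidb : (∀ i, P i b < P i a ∨ P i b < P i c) → False := by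
    intro h
    exact hnac (maj_of_subset P
      (fun i hi => lt_trans hi ((h i).resolve_left (lt_asymm hi))) hab2 hac)
  have hmida : (∀ i, P i a < P i b ∨ P i a < P i c) → False := by
    intro h
    have : strictMaj P c b := maj_of_subset P
      (fun i hi => lt_trans hi ((h i).resolve_right (lt_asymm hi))) hca2 (Ne.symm hbc_ne)
    exact lt_asymm hbc this
  have hmidc : (∀ i, P i c < P i a ∨ P i c < P i b) → False := by
    intro h
    have : strictMaj P b a := maj_of_subset P
      (fun i hi => lt_trans hi ((h i).resolve_right (lt_asymm hi))) hbc2 (Ne.symm hab_ne)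
    exact lt_asymm hab this
  -- case analysis on the axis order of a, b, c
  rcases Nat.lt_trichotomy (ax a) (ax b) with h1|h1|h1
  · rcases Nat.lt_trichotomy (ax b) (ax c) with h2|h2|h2
    · exact hmidb (key h1 h2)
    · exact hbc_ne (ax.injective (Fin.ext h2))
    · rcases Nat.lt_trichotomy (ax a) (ax c) with h3|h3|h3
      · exact hmidc (key h3 h2)
      · exact hac (ax.injective (Fin.ext h3))
      · exact hmida (fun i => (key h3 h1 i).symm)
  · exact hab_ne (ax.injective (Fin.ext h1))
  · rcases Nat.lt_trichotomy (ax a) (ax c) with h3|h3|h3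
    · exact hmida (key h1 h3)
    · exact hac (ax.injective (Fin.ext h3))
    · rcases Nat.lt_trichotomy (ax b) (ax c) with h2|h2|h2
      · exact hmidc (fun i => (key h2 h3 i).symm)
      · exact hbc_ne (ax.injective (Fin.ext h2))
      · exact hmidb (fun i => (key h2 h1 i).symm)
end

section
/- The strict majority relation of any single-peaked profile (with any number of voters) is transitive, i.e., the weak majority relation is quasi-transitive. -/
variable {A : Type*} [Fintype A] [DecidableEq A]

/-- The strict majority relation of any single-peaked profile (with any number
of voters) is transitive; i.e., the weak majority relation is quasi-transitive. -/
theorem strictMaj_transitive_of_singlePeaked {n : ℕ}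
    (P : Fin n → Vote A) (hsp : ∃ ax : Vote A, ∀ i, NoValley ax (P i)) :
    Transitive (strictMaj P) := by
  obtain ⟨ax, hax⟩ := hsp
  intro a b c hab hbc
  -- counting helper: number of voters preferring x to y
  set cnt : A → A → ℕ := fun x y => (Finset.univ.filter fun i => P i x < P i y).card with hcnt
  have hab' : cnt b a < cnt a b := hab
  have hbc' : cnt c b < cnt b c := hbc
  have hne_ab : a ≠ b := by rintro rfl; exact lt_irrefl _ hab
  have hne_bc : b ≠ c := by rintro rfl; exact lt_irrefl _ hbc
  have hne_ac : a ≠ c := by rintro rfl; exact lt_asymm hab' hbc'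
  have htot : ∀ (i : Fin n) (x y : A), x ≠ y → P i x < P i y ∨ P i y < P i x := by
    intro i x y hxy
    exact lt_or_gt_of_ne (fun e => hxy ((P i).injective e))
  -- counts of opposite preferences sum to n
  have hsum : ∀ (x y : A), x ≠ y → cnt x y + cnt y x = n := by
    intro x y hxy
    have := Finset.card_filter_add_card_filter_not
      (s := (Finset.univ : Finset (Fin n))) (p := fun i => P i x < P i y)
    rw [Finset.card_univ, Fintype.card_fin] at this
    have heq : (Finset.univ.filter fun i => ¬ P i x < P i y)
        = Finset.univ.filter fun i => P i y < P i x := by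
      apply Finset.filter_congr
      intro i _
      constructor
      · intro h; rcases htot i x y hxy with h'|h' <;> [exact absurd h' h; exact h']
      · intro h; exact lt_asymm h
    rw [heq] at this
    exact this
  -- the two strict majorities {a ≻ b} and {b ≻ c} intersect
  have hinter : ∃ i : Fin n, P i a < P i b ∧ P i b < P i c := by
    set S := Finset.univ.filter fun i => P i a < P i b with hS
    set T := Finset.univ.filter fun i => P i b < P i c with hT
    have h1 : n < S.card + T.card := by
      have e1 := hsum a b hne_ab
      have e2 := hsum b c hne_bc
      have : cnt a b + cnt b c > n := by omega
      simpa [hS, hT, hcnt] using this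
    have h2 : (S ∪ T).card + (S ∩ T).card = S.card + T.card :=
      Finset.card_union_add_card_inter S T
    have h3 : (S ∪ T).card ≤ n := by
      have := Finset.card_le_univ (S ∪ T)
      rwa [Fintype.card_fin] at this
    have h4 : 0 < (S ∩ T).card := by omega
    obtain ⟨i, hi⟩ := Finset.card_pos.mp h4
    rw [Finset.mem_inter, hS, hT, Finset.mem_filter, Finset.mem_filter] at hi
    exact ⟨i, hi.1.2, hi.2.2⟩
  -- no-valley at the axis-middle element, symmetric in the outer two
  have mid : ∀ (i : Fin n) (x y z : A),
      (ax x < ax y ∧ ax y < ax z) ∨ (ax z < ax y ∧ ax y < ax x) →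
      ¬(P i x < P i y ∧ P i z < P i y) := by
    rintro i x y z (⟨h1, h2⟩ | ⟨h1, h2⟩) h
    · exact hax i x y z h1 h2 h
    · exact hax i z y x h1 h2 ⟨h.2, h.1⟩
  -- trichotomy: which of a, b, c is in the middle of the axis
  have hxab : (ax a).1 ≠ (ax b).1 := fun e => hne_ab (ax.injective (Fin.val_injective e))
  have hxbc : (ax b).1 ≠ (ax c).1 := fun e => hne_bc (ax.injective (Fin.val_injective e))
  have hxac : (ax a).1 ≠ (ax c).1 := fun e => hne_ac (ax.injective (Fin.val_injective e))
  have tri : ((ax a < ax b ∧ ax b < ax c) ∨ (ax c < ax b ∧ ax b < ax a)) ∨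
      ((ax b < ax a ∧ ax a < ax c) ∨ (ax c < ax a ∧ ax a < ax b)) ∨
      ((ax a < ax c ∧ ax c < ax b) ∨ (ax b < ax c ∧ ax c < ax a)) := by
    simp only [Fin.lt_def]
    omega
  have hmono : ∀ (p q : Fin n → Prop) [DecidablePred p] [DecidablePred q],
      (∀ i, p i → q i) →
      (Finset.univ.filter p).card ≤ (Finset.univ.filter q).card := by
    intro p q _ _ h
    exact Finset.card_le_card (fun i hi => by
      simp only [Finset.mem_filter, Finset.mem_univ, true_and] at hi ⊢
      exact h i hi)
  rcases tri with hb | ha | hc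
  · -- b is in the middle
    have sub1 : cnt a b ≤ cnt a c := by
      apply hmono; intro i h
      rcases htot i a c hne_ac with h' | h'
      · exact h'
      · exact absurd ⟨h, lt_trans h' h⟩ (mid i a b c hb)
    have sub2 : cnt c a ≤ cnt b a := by
      apply hmono; intro i h
      rcases htot i a b hne_ab with h' | h'
      · exact absurd ⟨h', lt_trans h h'⟩ (mid i a b c hb)
      · exact h'
    exact lt_of_le_of_lt sub2 (lt_of_lt_of_le hab' sub1)
  · -- a is in the middle
    have ha' : (ax b < ax a ∧ ax a < ax c) ∨ (ax c < ax a ∧ ax a < ax b) := ha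
    have sub1 : cnt b c ≤ cnt a c := by
      apply hmono; intro i h
      rcases htot i a c hne_ac with h' | h'
      · exact h'
      · exact absurd ⟨lt_trans h h', h'⟩ (mid i b a c ha')
    have sub2 : cnt c a ≤ cnt c b := by
      apply hmono; intro i h
      rcases htot i a b hne_ab with h' | h'
      · exact lt_trans h h'
      · exact absurd ⟨h', h⟩ (mid i b a c ha')
    exact lt_of_le_of_lt sub2 (lt_of_lt_of_le hbc' sub1)
  · -- c is in the middle: impossible
    obtain ⟨i, h1, h2⟩ := hinter
    exact absurd ⟨lt_trans h1 h2, h2⟩ (mid i a c b hc)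
end

section
/- If a profile P with an odd number of voters is single-peaked with respect to an axis ◁, then the majority relation of P is itself a linear order that is single-peaked on ◁. -/
variable {A : Type*} [Fintype A] [DecidableEq A]

/-!
If no voter ranks `b` below both `a` and `c`, then every voter who prefers `a` to `b` also
prefers `b` to `c` and `a` to `c`, while every voter who prefers `c` to `b`, or `c` to `a`, also
prefers `b` to `a`. Counting, a majority for `a` over `b` yields majorities for `b` over `c` and
for `a` over `c`. Single-peakedness says exactly that the axis-middle element of a triple is never
ranked last, so the first consequence keeps the majority single-peaked and the second rules out
majority cycles. With an odd number of voters the majority relation is total, hence a strict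
linear order, which is read off as a ranking.
-/

open Finset Set

theorem mem_uIoo_or_mem_uIoo_or_mem_uIoo {α : Type*} [LinearOrder α] {x y z : α}
    (hxy : x ≠ y) (hyz : y ≠ z) (hzx : z ≠ x) :
    y ∈ uIoo x z ∨ z ∈ uIoo y x ∨ x ∈ uIoo z y := by
  simp only [uIoo, Set.mem_Ioo, inf_lt_iff, lt_sup_iff]
  grind

section

omit [DecidableEq A]

variable {n : ℕ} {P : Fin n → Vote A} {a b c : A}

def NeverWorst (P : Fin n → Vote A) (a b c : A) : Prop :=
  ∀ i, ¬(P i a < P i b ∧ P i c < P i b)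

theorem NeverWorst.symm (h : NeverWorst P a b c) : NeverWorst P c b a :=
  fun i hi => h i hi.symm

theorem neverWorst_of_mem_uIoo {ax : Vote A} (hsp : ∀ i, NoValley ax (P i))
    (h : ax b ∈ uIoo (ax a) (ax c)) : NeverWorst P a b c := by
  rcases le_total (ax a) (ax c) with hac | hca
  · rw [uIoo_of_le hac] at h
    exact fun i => hsp i a b c h.1 h.2
  · rw [uIoo_of_ge hca] at h
    exact NeverWorst.symm fun i => hsp i c b a h.1 h.2

theorem Vote.lt_of_not_lt (v : Vote A) (hab : a ≠ b) (h : ¬v b < v a) : v a < v b :=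
  (not_lt.1 h).lt_of_ne (v.injective.ne hab)

theorem strictMaj.ne (h : strictMaj P a b) : a ≠ b := by
  rintro rfl
  exact lt_irrefl _ h

theorem strictMaj.asymm (h : strictMaj P a b) : ¬strictMaj P b a :=
  lt_asymm h

theorem strictMaj.of_imp {d : A} (h : strictMaj P a b)
    (hfor : ∀ i, P i a < P i b → P i c < P i d)
    (hagainst : ∀ i, P i d < P i c → P i b < P i a) :
    strictMaj P c d :=
  calc (univ.filter fun i => P i d < P i c).card
      ≤ (univ.filter fun i => P i b < P i a).card :=
        card_le_card (monotone_filter_right _ fun i _ => hagainst i)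
    _ < (univ.filter fun i => P i a < P i b).card := h
    _ ≤ (univ.filter fun i => P i c < P i d).card :=
        card_le_card (monotone_filter_right _ fun i _ => hfor i)

theorem card_filter_lt_add_card_filter_gt (hab : a ≠ b) :
    (univ.filter fun i => P i a < P i b).card + (univ.filter fun i => P i b < P i a).card = n := by
  have hcompl : (univ.filter fun i => P i b < P i a) = univ.filter fun i => ¬P i a < P i b :=
    filter_congr fun i _ => ⟨lt_asymm, (P i).lt_of_not_lt hab.symm⟩
  rw [hcompl, card_filter_add_card_filter_not, card_univ, Fintype.card_fin]

theorem strictMaj_or_strictMaj (hodd : Odd n) (hab : a ≠ b) :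
    strictMaj P a b ∨ strictMaj P b a := by
  have hsum := card_filter_lt_add_card_filter_gt (P := P) hab
  obtain ⟨k, rfl⟩ := hodd
  unfold strictMaj
  omega

namespace NeverWorst

theorem strictMaj_right (hw : NeverWorst P a b c) (hbc : b ≠ c) (h : strictMaj P a b) :
    strictMaj P b c :=
  h.of_imp (fun i hab => (P i).lt_of_not_lt hbc fun hcb => hw i ⟨hab, hcb⟩)
    (fun i hcb => (P i).lt_of_not_lt h.ne.symm fun hab => hw i ⟨hab, hcb⟩)

theorem strictMaj_left (hw : NeverWorst P a b c) (hbc : b ≠ c) (h : strictMaj P a b) :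
    strictMaj P a c :=
  h.of_imp (fun i hab => hab.trans ((P i).lt_of_not_lt hbc fun hcb => hw i ⟨hab, hcb⟩))
    (fun i hca => (P i).lt_of_not_lt h.ne.symm fun hab => hw i ⟨hab, hca.trans hab⟩)

end NeverWorst

theorem strictMaj_trans (hodd : Odd n) {ax : Vote A} (hsp : ∀ i, NoValley ax (P i))
    (hab : strictMaj P a b) (hbc : strictMaj P b c) : strictMaj P a c := by
  have hac : a ≠ c := by
    rintro rfl
    exact hab.asymm hbc
  refine (strictMaj_or_strictMaj hodd hac).resolve_right fun hca => ?_
  rcases mem_uIoo_or_mem_uIoo_or_mem_uIoo (ax.injective.ne hab.ne) (ax.injective.ne hbc.ne)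
    (ax.injective.ne hca.ne) with hb | hc | ha
  · exact ((neverWorst_of_mem_uIoo hsp hb).strictMaj_left hbc.ne hab).asymm hca
  · exact ((neverWorst_of_mem_uIoo hsp hc).strictMaj_left hca.ne hbc).asymm hab
  · exact ((neverWorst_of_mem_uIoo hsp ha).strictMaj_left hab.ne hca).asymm hbc

theorem isStrictTotalOrder_strictMaj (hodd : Odd n) {ax : Vote A} (hsp : ∀ i, NoValley ax (P i)) :
    IsStrictTotalOrder A (strictMaj P) where
  irrefl _ h := h.ne rfl
  trans _ _ _ := strictMaj_trans hodd hsp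
  trichotomous a b hab hba := by
    by_contra hne
    exact (strictMaj_or_strictMaj hodd hne).elim hab hba

theorem exists_vote_lt_iff (r : A → A → Prop) [IsStrictTotalOrder A r] :
    ∃ w : Vote A, ∀ a b, r a b ↔ w a < w b := by
  classical
  let _ := linearOrderOfSTO r
  let e : A ≃o Fin (Fintype.card A) := (monoEquivOfFin A rfl).symm
  exact ⟨e.toEquiv, fun a b => e.lt_iff_lt.symm⟩

end

/-- If a profile with an odd number of voters is single-peaked with respect to
the axis `ax`, then its majority relation is a linear order that is itself
single-peaked on `ax`. -/
theorem majority_singlePeaked_of_singlePeaked_odd {n : ℕ} (hodd : Odd n)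
    (P : Fin n → Vote A) (ax : Vote A) (hsp : ∀ i, NoValley ax (P i)) :
    ∃ w : Vote A, (∀ a b : A, strictMaj P a b ↔ w a < w b) ∧ NoValley ax w := by
  have := isStrictTotalOrder_strictMaj hodd hsp
  obtain ⟨w, hw⟩ := exists_vote_lt_iff (strictMaj P)
  refine ⟨w, hw, fun a b c hab hbc ⟨hwab, hwcb⟩ => ?_⟩
  have hmid : NeverWorst P a b c := neverWorst_of_mem_uIoo hsp (mem_uIoo_of_lt hab hbc)
  exact (hmid.strictMaj_right (ne_of_apply_ne ax hbc.ne) ((hw a b).2 hwab)).asymm ((hw c b).2 hwcb)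
end

section
/- The Condorcet rule, defined on the domain of profiles admitting a strong Condorcet winner, is strategyproof: no voter can, by misreporting their preferences (resulting in a profile still admitting a Condorcet winner), obtain an outcome they strictly prefer to the Condorcet winner of the truthful profile. -/
variable {A : Type*} [Fintype A] [DecidableEq A]

/-- `c` is a strong Condorcet winner: for every other alternative `b`,
a strict majority of voters prefers `c` to `b`. -/
def StrongCondorcetWinner {n : ℕ} (P : Fin n → Vote A) (c : A) : Prop :=
  ∀ b : A, b ≠ c →
    (Finset.univ.filter fun i => P i b < P i c).card <
    (Finset.univ.filter fun i => P i c < P i b).card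

/-- The Condorcet rule is strategyproof on the domain of profiles admitting a
strong Condorcet winner: if `P` and `P'` differ only in voter `i`'s vote,
`c` is the Condorcet winner of `P` and `c'` that of `P'`, then voter `i`
(with truthful vote `P i`) does not strictly prefer `c'` to `c`. -/
theorem condorcet_rule_strategyproof {n : ℕ} (P P' : Fin n → Vote A) (i : Fin n)
    (hdiff : ∀ j : Fin n, j ≠ i → P j = P' j)
    (c c' : A) (hc : StrongCondorcetWinner P c) (hc' : StrongCondorcetWinner P' c') :
    ¬ (P i) c' < (P i) c := by
  intro h
  have hne : c' ≠ c := by rintro rfl; exact lt_irrefl _ h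
  have h1 := hc c' hne
  have h2 := hc' c hne.symm
  set A1 := Finset.univ.filter fun j => P j c' < P j c with hA1
  set B1 := Finset.univ.filter fun j => P j c < P j c' with hB1
  set A2 := Finset.univ.filter fun j => P' j c' < P' j c with hA2
  set B2 := Finset.univ.filter fun j => P' j c < P' j c' with hB2
  have hiA1 : i ∈ A1 := by simp [hA1, h]
  have hiB1 : i ∉ B1 := by simp [hB1, not_lt_of_gt h]
  have hsubA : A2 ⊆ insert i A1 := by
    intro j hj
    by_cases hji : j = i
    · simp [hji]
    · simp only [hA2, Finset.mem_filter, Finset.mem_univ, true_and] at hj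
      simp only [Finset.mem_insert, hA1, Finset.mem_filter, Finset.mem_univ, true_and]
      right; rw [hdiff j hji]; exact hj
  have hA2A1 : A2.card ≤ A1.card := by
    calc A2.card ≤ (insert i A1).card := Finset.card_le_card hsubA
    _ = A1.card := by rw [Finset.insert_eq_self.mpr hiA1]
  have hB1B2 : B1 ⊆ B2 := by
    intro j hj
    have hji : j ≠ i := by rintro rfl; exact hiB1 hj
    simp only [hB1, Finset.mem_filter, Finset.mem_univ, true_and] at hj
    simp only [hB2, Finset.mem_filter, Finset.mem_univ, true_and]
    rw [← hdiff j hji]; exact hj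
  have := Finset.card_le_card hB1B2
  omega
end

section
/- Representative Voter Theorem: if a profile with an odd number n = 2k−1 of voters is single-crossing with respect to the given ordering of voters, then the preference order of the median voter (voter k) coincides with the majority relation; in particular, the majority relation is transitive. -/
variable {A : Type*} [Fintype A] [DecidableEq A]

/-- `P` is single-crossing with respect to the given ordering of the voters:
for every pair of alternatives, the set of voters preferring one to the other
is an interval of the voter ordering (stated as convexity). -/
def SCGivenOrder {n : ℕ} (P : Fin n → Vote A) : Prop :=
  ∀ a b : A, ∀ i j k : Fin n, i ≤ j → j ≤ k →
    P i a < P i b → P k a < P k b → P j a < P j b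

/-- Representative Voter Theorem: in a single-crossing profile with an odd
number `n = 2k - 1` of voters, the majority relation coincides with the
preference order of the median voter (voter `k`); in particular it is
transitive. -/
theorem representative_voter_theorem {n k : ℕ} (hk : 0 < k) (hn : n = 2 * k - 1)
    (P : Fin n → Vote A) (hsc : SCGivenOrder P) :
    (∀ a b : A, strictMaj P a b ↔
      P ⟨k - 1, by omega⟩ a < P ⟨k - 1, by omega⟩ b) ∧
    Transitive (strictMaj P) := by
  have hnpos : 0 < n := by omega
  set m : Fin n := ⟨k - 1, by omega⟩ with hm
  -- forward: the median voter's preference implies strict majority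
  have key : ∀ a b : A, P m a < P m b → strictMaj P a b := by
    intro a b h
    have hab : a ≠ b := by
      intro he; subst he; exact lt_irrefl _ h
    have htri : ∀ i : Fin n, ¬ (P i a < P i b) → P i b < P i a := by
      intro i hi
      have hne : P i a ≠ P i b := fun he => hab ((P i).injective he)
      exact hne.lt_or_gt.resolve_left hi
    set S := Finset.univ.filter fun i : Fin n => P i a < P i b with hS
    set T := Finset.univ.filter fun i : Fin n => P i b < P i a with hT
    have hcase : (∀ i : Fin n, i ≤ m → i ∈ S) ∨ (∀ i : Fin n, m ≤ i → i ∈ S) := by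
      by_contra hc
      push_neg at hc
      obtain ⟨⟨i, hi, hiS⟩, ⟨j, hj, hjS⟩⟩ := hc
      have h1 : P i b < P i a := htri i (by simpa [hS] using hiS)
      have h2 : P j b < P j a := htri j (by simpa [hS] using hjS)
      have := hsc b a i m j hi hj h1 h2
      exact absurd h (not_lt.mpr this.le)
    have hkS : k ≤ S.card := by
      rcases hcase with hc | hc
      · have hsub : Finset.Iic m ⊆ S := by
          intro i hi
          exact hc i (Finset.mem_Iic.mp hi)
        have hcard : (Finset.Iic m).card = k := by
          rw [Fin.card_Iic]; simp [hm]; omega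
        calc k = (Finset.Iic m).card := hcard.symm
          _ ≤ S.card := Finset.card_le_card hsub
      · have hsub : Finset.Ici m ⊆ S := by
          intro i hi
          exact hc i (Finset.mem_Ici.mp hi)
        have hcard : (Finset.Ici m).card = k := by
          have : (Finset.Ici m).card = n - (m : ℕ) := by
            simpa using Fin.card_Ici m
          rw [this]; simp [hm]; omega
        calc k = (Finset.Ici m).card := hcard.symm
          _ ≤ S.card := Finset.card_le_card hsub
    have hTeq : T = Finset.univ.filter fun i : Fin n => ¬ (P i a < P i b) := by
      ext i
      simp only [hT, Finset.mem_filter, Finset.mem_univ, true_and]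
      exact ⟨fun h' => not_lt.mpr h'.le, htri i⟩
    have hpart : S.card + T.card = n := by
      rw [hTeq, hS, Finset.card_filter_add_card_filter_not]
      simp
    show T.card < S.card
    omega
  have hiff : ∀ a b : A, strictMaj P a b ↔ P m a < P m b := by
    intro a b
    constructor
    · intro hmaj
      by_contra hnot
      rcases eq_or_ne (P m a) (P m b) with he | hne
      · have : a = b := (P m).injective he
        subst this
        exact lt_irrefl _ hmaj
      · have hba : P m b < P m a := hne.lt_or_gt.resolve_left hnot
        have := key b a hba
        exact absurd hmaj (lt_asymm this)
    · exact key a b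
  exact ⟨hiff, fun a b c hab hbc =>
    (hiff a c).mpr (lt_trans ((hiff a b).mp hab) ((hiff b c).mp hbc))⟩
end

section
/- Suppose a profile P = (v_1, ..., v_n) of pairwise distinct linear orders is single-crossing with respect to the given ordering. Then the only permutations of the voters making the profile single-crossing are the identity and the full reversal. -/
variable {A : Type*} [Fintype A] [DecidableEq A]

/-- A strictly monotone permutation of a finite linear order is the identity. -/
lemma strictMono_perm_eq_refl {n : ℕ} (σ : Equiv.Perm (Fin n)) (h : StrictMono σ) :
    σ = Equiv.refl (Fin n) := by
  have he : StrictMono.orderIsoOfSurjective (⇑σ) h σ.surjective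
      = OrderIso.refl (Fin n) := Subsingleton.elim _ _
  ext x
  have h4 : StrictMono.orderIsoOfSurjective (⇑σ) h σ.surjective x = x := by rw [he]; rfl
  have h5 := congrFun (StrictMono.coe_orderIsoOfSurjective (⇑σ) h σ.surjective) x
  exact congrArg Fin.val (h5.symm.trans h4)

/-- Two distinct votes disagree on some pair. -/
lemma dist_disagree {n : ℕ} (P : Fin n → Vote A) (hdist : Function.Injective P)
    {i j : Fin n} (hij : i ≠ j) : ∃ a b, P i a < P i b ∧ P j b < P j a := by
  by_contra hcon
  push_neg at hcon
  apply hij; apply hdist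
  -- show P i = P j via: (P j) ∘ (P i).symm strictly monotone
  have hmono : StrictMono (⇑((P i).symm.trans (P j))) := by
    intro x y hxy
    set a := (P i).symm x
    set b := (P i).symm y
    have hab : P i a < P i b := by simpa [a, b] using hxy
    have hle : P j a ≤ P j b := hcon a b hab
    have hne : P j a ≠ P j b := by
      intro h
      have : a = b := (P j).injective h
      exact absurd (congrArg (P i) this) (ne_of_lt hab)
    simpa [Equiv.trans_apply] using lt_of_le_of_ne hle hne
  have := strictMono_perm_eq_refl ((P i).symm.trans (P j)) hmono
  ext a
  have h3 : ((P i).symm.trans (P j)) ((P i) a) = (P i) a := by rw [this]; rfl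
  rw [Equiv.trans_apply, Equiv.symm_apply_apply] at h3
  exact congrArg Fin.val h3.symm

/-- Betweenness predicate from single-crossing. -/
def SCBtw {n : ℕ} (P : Fin n → Vote A) (i j k : Fin n) : Prop :=
  ∀ a b, P i a < P i b → P k a < P k b → P j a < P j b

lemma not_btw_left {n : ℕ} (P : Fin n → Vote A) (hdist : Function.Injective P)
    (hsc : SCGivenOrder P) {i j k : Fin n} (hji : j < i) (hik : i ≤ k) :
    ¬ SCBtw P i j k := by
  obtain ⟨a, b, hia, hja⟩ := dist_disagree P hdist (ne_of_gt hji)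
  intro hB
  have hk : P k a < P k b := by
    rcases lt_or_ge (P k a) (P k b) with h | h
    · exact h
    have hne : P k b ≠ P k a := by
      intro h'
      have : b = a := (P k).injective h'
      subst this; exact absurd hia (lt_irrefl _)
    have hk' : P k b < P k a := lt_of_le_of_ne h hne
    exact absurd (hsc b a j i k (le_of_lt hji) hik hja hk') (not_lt_of_gt hia)
  exact absurd (hB a b hia hk) (not_lt_of_gt hja)

lemma not_btw_right {n : ℕ} (P : Fin n → Vote A) (hdist : Function.Injective P)
    (hsc : SCGivenOrder P) {i j k : Fin n} (hik : i ≤ k) (hkj : k < j) :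
    ¬ SCBtw P i j k := by
  obtain ⟨a, b, hka, hja⟩ := dist_disagree P hdist (ne_of_lt hkj)
  intro hB
  have hi : P i a < P i b := by
    rcases lt_or_ge (P i a) (P i b) with h | h
    · exact h
    have hne : P i b ≠ P i a := by
      intro h'
      have : b = a := (P i).injective h'
      subst this; exact absurd hka (lt_irrefl _)
    have hi' : P i b < P i a := lt_of_le_of_ne h hne
    exact absurd (hsc b a i k j hik (le_of_lt hkj) hi' hja) (not_lt_of_gt hka)
  exact absurd (hB a b hi hka) (not_lt_of_gt hja)

/-- If a profile of pairwise distinct votes is single-crossing with respect to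
the given ordering, then the only permutations of the voters making the profile
single-crossing are the identity and the full reversal. -/
theorem singleCrossing_order_unique {n : ℕ} (P : Fin n → Vote A)
    (hdist : Function.Injective P) (hsc : SCGivenOrder P)
    (σ : Equiv.Perm (Fin n)) (hsc' : SCGivenOrder (P ∘ σ)) :
    σ = Equiv.refl (Fin n) ∨ σ = Fin.revPerm := by
  rcases n with _ | m
  · left; ext x; exact x.elim0
  -- Betweenness transfers through σ
  have hSCBtw : ∀ x y z : Fin (m + 1), x ≤ y → y ≤ z →
      min (σ x) (σ z) ≤ σ y ∧ σ y ≤ max (σ x) (σ z) := by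
    intro x y z hxy hyz
    have hB : SCBtw P (σ x) (σ y) (σ z) := fun a b h1 h2 =>
      hsc' a b x y z hxy hyz h1 h2
    have hB' : SCBtw P (min (σ x) (σ z)) (σ y) (max (σ x) (σ z)) := by
      rcases le_total (σ x) (σ z) with h | h
      · simpa [min_eq_left h, max_eq_right h] using hB
      · intro a b h1 h2
        simp only [min_eq_right h, max_eq_left h] at h1 h2 ⊢
        exact hB a b h2 h1
    constructor
    · by_contra hlt
      push_neg at hlt
      exact not_btw_left P hdist hsc hlt (min_le_max) hB'
    · by_contra hlt
      push_neg at hlt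
      exact not_btw_right P hdist hsc (min_le_max) hlt hB'
  set z : Fin (m + 1) := Fin.last m with hz
  rcases le_total (σ 0) (σ z) with hcase | hcase
  · -- monotone case
    left
    apply strictMono_perm_eq_refl
    intro x y hxy
    have h0y : σ 0 ≤ σ y := by
      have := hSCBtw 0 y z (Fin.zero_le y) (Fin.le_last y)
      calc σ 0 = min (σ 0) (σ z) := (min_eq_left hcase).symm
        _ ≤ σ y := this.1
    have hxy' : σ x ≤ σ y := by
      have := hSCBtw 0 x y (Fin.zero_le x) (le_of_lt hxy)
      calc σ x ≤ max (σ 0) (σ y) := this.2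
        _ = σ y := max_eq_right h0y
    exact lt_of_le_of_ne hxy' (fun h => absurd (σ.injective h) (ne_of_lt hxy))
  · -- antitone case
    right
    have hanti : ∀ x y : Fin (m + 1), x < y → σ y < σ x := by
      intro x y hxy
      have h0y : σ y ≤ σ 0 := by
        have := hSCBtw 0 y z (Fin.zero_le y) (Fin.le_last y)
        calc σ y ≤ max (σ 0) (σ z) := this.2
          _ = σ 0 := max_eq_left hcase
      have hxy' : σ y ≤ σ x := by
        have := hSCBtw 0 x y (Fin.zero_le x) (le_of_lt hxy)
        calc σ y = min (σ 0) (σ y) := (min_eq_right h0y).symm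
          _ ≤ σ x := by
            rcases le_total (σ 0) (σ y) with h | h
            · calc min (σ 0) (σ y) = σ 0 := min_eq_left h
                _ = min (σ 0) (σ y) := (min_eq_left h).symm
                _ ≤ σ x := this.1
            · exact this.1
      exact lt_of_le_of_ne hxy' (fun h => absurd (σ.injective h) (ne_of_gt hxy))
    have hmono : StrictMono (⇑(σ.trans Fin.revPerm)) := by
      intro x y hxy
      simp only [Equiv.trans_apply, Fin.revPerm_apply]
      exact Fin.rev_lt_rev.mpr (hanti x y hxy)
    have := strictMono_perm_eq_refl (σ.trans Fin.revPerm) hmono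
    ext x
    have hx := congrArg (fun f => f.toFun x) this
    have h2 : (σ x).rev.rev = x.rev := congrArg Fin.rev hx
    rw [Fin.rev_rev] at h2
    exact congrArg Fin.val h2
end

section
/- A single-crossing profile over m alternatives contains at most m(m−1)/2 + 1 pairwise distinct votes. -/
variable {A : Type*} [Fintype A] [DecidableEq A]

open Finset

section

omit [DecidableEq A]

theorem Set.ncard_le_of_isChain_of_card_le {γ : Type*} {s : Set (Finset γ)}
    (hs : IsChain (· ⊆ ·) s) {C : ℕ} (hC : ∀ t ∈ s, #t ≤ C) : s.ncard ≤ C + 1 := by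
  have hinj : Set.InjOn card s := fun t ht t' ht' h => by
    rcases hs.total ht ht' with htt' | ht't
    · exact Finset.eq_of_subset_of_card_le htt' h.ge
    · exact (Finset.eq_of_subset_of_card_le ht't h.le).symm
  calc s.ncard = (card '' s).ncard := hinj.ncard_image.symm
    _ ≤ (Set.Iic C).ncard :=
      Set.ncard_le_ncard (by rintro _ ⟨t, ht, rfl⟩; exact hC t ht) (Set.finite_Iic C)
    _ = C + 1 := by rw [← coe_Iic, Set.ncard_coe_finset, Nat.card_Iic]

namespace Vote

theorem ext_of_lt_iff {e f : Vote A} (h : ∀ a b, e a < e b ↔ f a < f b) : e = f := by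
  have hmono : StrictMono (f ∘ e.symm) := fun x y hxy => by
    simpa using (h (e.symm x) (e.symm y)).1 (by simpa using hxy)
  exact Equiv.ext fun a => by simpa using (congrFun hmono.eq_id (e a)).symm

def disagreements (u v : Vote A) : Finset (A × A) :=
  univ.filter fun p => u p.1 < u p.2 ∧ v p.2 < v p.1

theorem disagreements_injective (u : Vote A) : Function.Injective (disagreements u) := by
  intro v w h
  have hflip : ∀ a b, u a < u b → (v b < v a ↔ w b < w a) := fun a b hab => by
    simpa [disagreements, hab] using Finset.ext_iff.1 h (a, b)
  refine ext_of_lt_iff fun a b => ?_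
  obtain rfl | hne := eq_or_ne a b
  · simp
  have hlt_iff : ∀ x : Vote A, x a < x b ↔ ¬ x b < x a := fun x =>
    ⟨lt_asymm, fun h => (le_of_not_gt h).lt_of_ne (x.injective.ne hne)⟩
  rcases lt_trichotomy (u a) (u b) with hab | hab | hab
  · rw [hlt_iff v, hlt_iff w, hflip a b hab]
  · exact absurd (u.injective hab) hne
  · exact hflip b a hab

theorem card_disagreements_le (u v : Vote A) :
    #(disagreements u v) ≤ Fintype.card A * (Fintype.card A - 1) / 2 := by
  calc #(disagreements u v) ≤ #(univ.filter fun p : A × A => u p.1 < u p.2) :=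
        card_le_card (monotone_filter_right _ fun _ _ hp => hp.1)
    _ = #(univ.filter fun x : Fin (Fintype.card A) × Fin (Fintype.card A) => x.1 < x.2) :=
        card_equiv (u.prodCongr u) (by simp)
    _ = Fintype.card A * (Fintype.card A - 1) / 2 := by
        simpa [Nat.choose_two_right] using card_product_filter_lt (s := (univ : Finset (Fin _)))

end Vote

open Vote

theorem SCGivenOrder.disagreements_mono {n : ℕ} {P : Fin n → Vote A} (hP : SCGivenOrder P)
    {z i j : Fin n} (hzi : z ≤ i) (hij : i ≤ j) :
    disagreements (P z) (P i) ⊆ disagreements (P z) (P j) := by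
  intro p hp
  simp only [disagreements, mem_filter, mem_univ, true_and] at hp ⊢
  obtain ⟨hz, hi⟩ := hp
  refine ⟨hz, ((P j).injective.ne ?_).lt_or_gt.resolve_left fun hj => ?_⟩
  · exact fun h => hz.ne (by rw [h])
  · exact lt_asymm hi (hP p.1 p.2 z i j hzi hij hz hj)

end

/-- A single-crossing profile over `m` alternatives contains at most
`m(m-1)/2 + 1` pairwise distinct votes. -/
theorem singleCrossing_distinct_votes_bound {n : ℕ} (P : Fin n → Vote A)
    (hsc : ∃ σ : Equiv.Perm (Fin n), SCGivenOrder (P ∘ σ)) :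
    Set.ncard (Set.range P) ≤ Fintype.card A * (Fintype.card A - 1) / 2 + 1 := by
  obtain ⟨σ, hsc⟩ := hsc
  rw [← σ.surjective.range_comp P]
  cases n with
  | zero => simp [Set.range_eq_empty]
  | succ n =>
    set Q := P ∘ σ
    calc (Set.range Q).ncard = (Set.range (Vote.disagreements (Q 0) ∘ Q)).ncard := by
          rw [Set.range_comp (Vote.disagreements (Q 0)) Q,
            Set.ncard_image_of_injective _ (Vote.disagreements_injective _)]
      _ ≤ _ := Set.ncard_le_of_isChain_of_card_le
          (Monotone.isChain_range fun i j hij => hsc.disagreements_mono (Fin.zero_le i) hij)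
          (by rintro _ ⟨i, rfl⟩; exact Vote.card_disagreements_le _ _)
end

section
/- Every 1-Euclidean profile is single-peaked (with respect to the axis induced by the embedding of the alternatives) and single-crossing (with respect to the ordering of voters induced by the embedding). -/
variable {A : Type*} [Fintype A] [DecidableEq A]

/-- Every 1-Euclidean profile (witnessed by an embedding `x` of the voters and
`y` of the alternatives into `ℝ`) is single-peaked with respect to the axis
induced by `y` (all upper contour sets are intervals of the `y`-ordering) and
single-crossing with respect to the voter ordering induced by `x`. -/
theorem oneEuclidean_singlePeaked_singleCrossing {n : ℕ} (P : Fin n → Vote A)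
    (x : Fin n → ℝ) (y : A → ℝ)
    (heucl : ∀ (i : Fin n) (a b : A), P i a < P i b ↔ |x i - y a| < |x i - y b|) :
    (∀ (i : Fin n) (c a b d : A), y a < y b → y b < y d →
        P i a ≤ P i c → P i d ≤ P i c → P i b ≤ P i c) ∧
    (∀ (a b : A) (i j k : Fin n), x i ≤ x j → x j ≤ x k →
        P i a < P i b → P k a < P k b → P j a < P j b) := by
  have hle : ∀ (i : Fin n) (a b : A), P i a ≤ P i b ↔ |x i - y a| ≤ |x i - y b| := by
    intro i a b
    rw [← not_lt, heucl, not_lt]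
  have key : ∀ u v : ℝ, (|u| ≤ |v| ↔ u^2 ≤ v^2) ∧ (|u| < |v| ↔ u^2 < v^2) := by
    intro u v
    rw [← sq_abs u, ← sq_abs v]
    constructor
    · exact (pow_le_pow_iff_left₀ (abs_nonneg u) (abs_nonneg v) two_ne_zero).symm
    · exact (pow_lt_pow_iff_left₀ (abs_nonneg u) (abs_nonneg v) two_ne_zero).symm
  constructor
  · intro i c a b d hab hbd hac hdc
    rw [hle] at hac hdc ⊢
    rw [(key _ _).1] at hac hdc ⊢
    rcases le_total (x i) (y b) with h | h
    · nlinarith [sq_nonneg (x i - y b)]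
    · nlinarith [sq_nonneg (x i - y b)]
  · intro a b i j k hij hjk hiab hkab
    rw [heucl] at hiab hkab ⊢
    rw [(key _ _).2] at hiab hkab ⊢
    rcases le_total (y a) (y b) with h | h
    · nlinarith [mul_nonneg (sub_nonneg.2 hjk) (sub_nonneg.2 h)]
    · nlinarith [mul_nonneg (sub_nonneg.2 hij) (sub_nonneg.2 h)]
end

section
/- If a tree T on the alternative set A has a vertex of degree at least 3, then there exists a profile of preferences single-peaked on T whose majority relation is not transitive. Hence paths are the only trees on which single-peakedness guarantees transitive majority relations. -/
variable {A : Type*} [Fintype A] [DecidableEq A] [Nonempty A]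

/-- `v` is single-peaked on the graph `G`. -/
def SinglePeakedOnTree (G : SimpleGraph A) (v : Vote A) : Prop :=
  ∀ a b : A, a ≠ b →
    (∃ p : G.Walk (top v) b, p.IsPath ∧ a ∈ p.support) → v a < v b

/-!
Let `a, b, c` be three neighbours of `x`. In a tree the unique path from `x` to `b` is a
geodesic, so every vertex on it other than `b` is closer to `x`; hence any vote ranking the
alternatives by increasing distance from `x` is single-peaked with peak `x`, however it breaks
ties. Breaking the tie among `a, b, c` in the three cyclic orders `a b c`, `b c a`, `c a b` gives
three such votes whose majority relation contains the Condorcet cycle `a > b > c > a`.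
-/

open Finset SimpleGraph

namespace SimpleGraph

variable {V : Type*} {G : SimpleGraph V}

theorem IsAcyclic.length_eq_dist_of_isPath (hG : G.IsAcyclic) {u v : V} {p : G.Walk u v}
    (hp : p.IsPath) : p.length = G.dist u v := by
  obtain ⟨q, hq, hql⟩ := p.reachable.exists_path_of_dist
  have : p = q := congrArg Subtype.val ((hG.subsingleton_path u v).elim ⟨p, hp⟩ ⟨q, hq⟩)
  rw [this, hql]

theorem IsAcyclic.dist_lt_of_mem_support [DecidableEq V] (hG : G.IsAcyclic) {u v w : V}
    {p : G.Walk u v} (hp : p.IsPath) (hw : w ∈ p.support) (hwv : w ≠ v) :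
    G.dist u w < G.dist u v := by
  rw [← hG.length_eq_dist_of_isPath hp, ← hG.length_eq_dist_of_isPath (hp.takeUntil hw)]
  exact Walk.length_takeUntil_lt_length hw hwv

end SimpleGraph

section Votes

variable {α : Type*} [Fintype α]

theorem top_eq_of_forall_lt [Nonempty α] (v : Vote α) {x : α} (hx : ∀ y, y ≠ x → v x < v y) :
    top v = x := by
  by_contra h
  have hlt := hx (top v) h
  rw [top, v.apply_symm_apply] at hlt
  exact Nat.not_lt_zero _ hlt

theorem exists_vote_of_strictMono {L : Type*} [LinearOrder L] (key : α → L)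
    (hkey : Function.Injective key) : ∃ v : Vote α, ∀ y z, key y < key z → v y < v z :=
  let _ : LinearOrder α := LinearOrder.lift' key hkey
  ⟨(Fintype.orderIsoFinOfCardEq α rfl).symm.toEquiv,
    fun _ _ h => (Fintype.orderIsoFinOfCardEq α rfl).symm.strictMono h⟩

theorem exists_vote_of_lex (d r : α → ℕ) :
    ∃ v : Vote α, ∀ y z, d y < d z ∨ d y = d z ∧ r y < r z → v y < v z := by
  let e := Fintype.equivFin α
  obtain ⟨v, hv⟩ := exists_vote_of_strictMono (fun y => toLex (d y, toLex (r y, e y))) <| by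
    intro y z h
    simp only [Prod.mk.injEq, EmbeddingLike.apply_eq_iff_eq] at h
    exact h.2.2
  exact ⟨v, fun y z h => hv y z (Prod.Lex.toLex_lt_toLex.mpr (h.imp_right
    fun ⟨hd, hr⟩ => ⟨hd, Prod.Lex.toLex_lt_toLex.mpr (.inl hr)⟩))⟩

theorem strictMaj_asymm {n : ℕ} {P : Fin n → Vote α} {a b : α} (h : strictMaj P a b) :
    ¬ strictMaj P b a :=
  lt_asymm h

theorem strictMaj_of_lt_two_mul_card {n : ℕ} {P : Fin n → Vote α} {a b : α}
    (h : n < 2 * #{i | P i a < P i b}) : strictMaj P a b := by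
  have hsub : univ.filter (fun i => P i b < P i a) ⊆ univ.filter fun i => ¬ P i a < P i b :=
    monotone_filter_right _ fun _ _ => lt_asymm
  have := card_le_card hsub
  have := card_filter_add_card_filter_not (s := univ) fun i => P i a < P i b
  simp only [card_univ, Fintype.card_fin] at *
  unfold strictMaj
  omega

theorem strictMaj_of_two_of_three {P : Fin 3 → Vote α} {a b : α} {i j : Fin 3} (hij : i ≠ j)
    (hi : P i a < P i b) (hj : P j a < P j b) : strictMaj P a b := by
  apply strictMaj_of_lt_two_mul_card
  have : {i, j} ⊆ univ.filter fun k => P k a < P k b := by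
    simp [insert_subset_iff, hi, hj]
  have := card_le_card this
  rw [card_pair hij] at this
  omega

theorem not_transitive_strictMaj_of_condorcet_cycle {u v w : Vote α} {a b c : α}
    (hu : u a < u b ∧ u b < u c) (hv : v b < v c ∧ v c < v a) (hw : w c < w a ∧ w a < w b) :
    ¬ Transitive (strictMaj ![u, v, w]) := by
  intro htrans
  have hab : strictMaj ![u, v, w] a b :=
    strictMaj_of_two_of_three (by decide : (0 : Fin 3) ≠ 2) hu.1 hw.2
  have hbc : strictMaj ![u, v, w] b c :=
    strictMaj_of_two_of_three (by decide : (0 : Fin 3) ≠ 1) hu.2 hv.1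
  have hca : strictMaj ![u, v, w] c a :=
    strictMaj_of_two_of_three (by decide : (1 : Fin 3) ≠ 2) hv.2 hw.1
  exact strictMaj_asymm (htrans hab hbc) hca

end Votes

theorem singlePeakedOnTree_of_dist_lt {G : SimpleGraph A} (hG : G.IsTree) (v : Vote A) (x : A)
    (hv : ∀ y z, G.dist x y < G.dist x z → v y < v z) : SinglePeakedOnTree G v := by
  have htop : top v = x := top_eq_of_forall_lt v fun y hy => hv x y <| by
    rw [dist_self]
    exact hG.connected.pos_dist_of_ne hy.symm
  rintro y z hyz ⟨p, hp, hy⟩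
  subst htop
  exact hv y z (hG.isAcyclic.dist_lt_of_mem_support hp hy hyz)

theorem exists_singlePeakedOnTree_vote {G : SimpleGraph A} (hG : G.IsTree) (x : A) {p q s : A}
    (hpq : p ≠ q) (hps : p ≠ s) (hqs : q ≠ s)
    (hdpq : G.dist x p = G.dist x q) (hdqs : G.dist x q = G.dist x s) :
    ∃ v : Vote A, SinglePeakedOnTree G v ∧ v p < v q ∧ v q < v s := by
  obtain ⟨v, hv⟩ :=
    exists_vote_of_lex (G.dist x) fun y => if y = p then 0 else if y = q then 1 else 2
  refine ⟨v, singlePeakedOnTree_of_dist_lt hG v x fun y z h => hv y z (.inl h),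
    hv p q (.inr ⟨hdpq, ?_⟩), hv q s (.inr ⟨hdqs, ?_⟩)⟩
  · simp [hpq.symm]
  · simp [hpq.symm, hps.symm, hqs.symm]

/-- If a tree `G` on the alternatives has a vertex of degree at least 3, then
there is a profile single-peaked on `G` whose majority relation is not
transitive; hence paths are the only trees guaranteeing transitivity. -/
theorem nontransitive_majority_of_tree_with_high_degree
    (G : SimpleGraph A) [DecidableRel G.Adj] (hT : G.IsTree)
    (x : A) (hdeg : 3 ≤ G.degree x) :
    ∃ (n : ℕ) (P : Fin n → Vote A),
      (∀ i, SinglePeakedOnTree G (P i)) ∧ ¬ Transitive (strictMaj P) := by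
  obtain ⟨a, ha, b, hb, c, hc, hab, hac, hbc⟩ := two_lt_card.mp hdeg
  have hdist : ∀ y ∈ G.neighborFinset x, G.dist x y = 1 := fun y hy =>
    dist_eq_one_iff_adj.mpr ((G.mem_neighborFinset x y).mp hy)
  have hd {y z} (hy : y ∈ G.neighborFinset x) (hz : z ∈ G.neighborFinset x) :
      G.dist x y = G.dist x z := (hdist y hy).trans (hdist z hz).symm
  obtain ⟨u, hu, hu'⟩ := exists_singlePeakedOnTree_vote hT x hab hac hbc (hd ha hb) (hd hb hc)
  obtain ⟨v, hv, hv'⟩ :=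
    exists_singlePeakedOnTree_vote hT x hbc hab.symm hac.symm (hd hb hc) (hd hc ha)
  obtain ⟨w, hw, hw'⟩ :=
    exists_singlePeakedOnTree_vote hT x hac.symm hbc.symm hab (hd hc ha) (hd ha hb)
  refine ⟨3, ![u, v, w], fun i => ?_, not_transitive_strictMaj_of_condorcet_cycle hu' hv' hw'⟩
  fin_cases i
  exacts [hu, hv, hw]
end

section
/- A profile is single-crossing on a tree T (whose vertices are the voters) if and only if for every path Q in T, the restriction of the profile to the voters on Q (in path order) is single-crossing with respect to that order. -/
variable {A : Type*} [Fintype A] [DecidableEq A]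

/-- The sequence of voters `L` is single-crossing in the given order: for every
pair of alternatives, the voters preferring one to the other occupy an
interval (convex set) of positions of `L`. -/
def SCList {n : ℕ} (P : Fin n → Vote A) (L : List (Fin n)) : Prop :=
  ∀ a b : A, ∀ i j k : ℕ, ∀ hij : i ≤ j, ∀ hjk : j ≤ k, ∀ hk : k < L.length,
    P (L[i]'(by omega)) a < P (L[i]'(by omega)) b →
    P (L[k]'hk) a < P (L[k]'hk) b →
    P (L[j]'(by omega)) a < P (L[j]'(by omega)) b

namespace SimpleGraph

variable {V : Type*} {G : SimpleGraph V}

def IsPathConvex (G : SimpleGraph V) (S : Set V) : Prop :=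
  ∀ ⦃u v : V⦄ (p : G.Walk u v), p.IsPath → u ∈ S → v ∈ S → ∀ x ∈ p.support, x ∈ S

lemma IsTree.support_subset_of_isPath (hT : G.IsTree) {u v : V} {p : G.Walk u v}
    (hp : p.IsPath) (q : G.Walk u v) : p.support ⊆ q.support := by
  classical
  rw [(hT.existsUnique_path u v).unique hp q.bypass_isPath]
  exact q.support_bypass_subset_support

lemma IsTree.isPathConvex_of_preconnected (hT : G.IsTree) {S : Set V}
    (hS : (G.induce S).Preconnected) : G.IsPathConvex S := by
  intro u v p hp hu hv x hx
  obtain ⟨q⟩ := hS ⟨u, hu⟩ ⟨v, hv⟩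
  have hxq : x ∈ (q.map (Embedding.induce S).toHom).support :=
    hT.support_subset_of_isPath hp _ hx
  rw [Walk.support_map] at hxq
  obtain ⟨y, -, rfl⟩ := List.mem_map.mp hxq
  exact y.2

lemma Preconnected.induce_of_isPathConvex (hG : G.Preconnected) {S : Set V}
    (hS : G.IsPathConvex S) : (G.induce S).Preconnected := by
  classical
  rintro ⟨u, hu⟩ ⟨v, hv⟩
  obtain ⟨p⟩ := hG u v
  exact ⟨p.bypass.induce S (hS _ p.bypass_isPath hu hv)⟩

lemma IsTree.induce_preconnected_iff (hT : G.IsTree) {S : Set V} :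
    (G.induce S).Preconnected ↔ G.IsPathConvex S :=
  ⟨hT.isPathConvex_of_preconnected, hT.connected.preconnected.induce_of_isPathConvex⟩

lemma Walk.IsPath.exists_isPath_getVert_mem_support {u v : V} {p : G.Walk u v}
    (hp : p.IsPath) {i j k : ℕ} (hij : i ≤ j) (hjk : j ≤ k) :
    ∃ q : G.Walk (p.getVert i) (p.getVert k), q.IsPath ∧ p.getVert j ∈ q.support := by
  have hk : (p.drop i).getVert (k - i) = p.getVert k := by
    rw [Walk.drop_getVert, Nat.add_sub_cancel' (hij.trans hjk)]
  refine ⟨((p.drop i).take (k - i)).copy rfl hk, ?_, ?_⟩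
  · exact (Walk.isPath_copy _ _ _).mpr ((hp.drop i).take (k - i))
  · rw [Walk.support_copy]
    convert ((p.drop i).take (k - i)).getVert_mem_support (j - i) using 1
    rw [Walk.take_getVert, Walk.drop_getVert, min_eq_right (Nat.sub_le_sub_right hjk i),
      Nat.add_sub_cancel' hij]

lemma isPathConvex_iff_getVert {S : Set V} :
    G.IsPathConvex S ↔ ∀ ⦃u v : V⦄ (p : G.Walk u v), p.IsPath → ∀ i j k : ℕ,
      i ≤ j → j ≤ k → k ≤ p.length → p.getVert i ∈ S → p.getVert k ∈ S → p.getVert j ∈ S := by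
  constructor
  · intro hS u v p hp i j k hij hjk _ hi hk
    obtain ⟨q, hq, hj⟩ := hp.exists_isPath_getVert_mem_support hij hjk
    exact hS q hq hi hk _ hj
  · intro hS u v p hp hu hv x hx
    obtain ⟨j, rfl, hj⟩ := Walk.mem_support_iff_exists_getVert.mp hx
    exact hS p hp 0 j p.length j.zero_le hj le_rfl (p.getVert_zero.symm ▸ hu)
      (p.getVert_length.symm ▸ hv)

end SimpleGraph

lemma scList_support_iff {A : Type*} [Fintype A] {n : ℕ} (P : Fin n → Vote A)
    {G : SimpleGraph (Fin n)} {u v : Fin n} (p : G.Walk u v) :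
    SCList P p.support ↔ ∀ a b : A, ∀ i j k : ℕ, i ≤ j → j ≤ k → k ≤ p.length →
      P (p.getVert i) a < P (p.getVert i) b → P (p.getVert k) a < P (p.getVert k) b →
      P (p.getVert j) a < P (p.getVert j) b := by
  simp only [SCList, SimpleGraph.Walk.length_support, Nat.lt_succ_iff,
    SimpleGraph.Walk.support_getElem_eq_getVert]

/-- A profile is single-crossing on a tree `G` on the voters iff for every path
in `G`, the restriction of the profile to the voters on the path (in path
order) is single-crossing with respect to that order. -/
theorem singleCrossing_on_tree_iff_paths {n : ℕ}
    (G : SimpleGraph (Fin n)) (hT : G.IsTree) (P : Fin n → Vote A) :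
    (∀ a b : A, (G.induce {i : Fin n | P i a < P i b}).Preconnected) ↔
    (∀ (u v : Fin n) (p : G.Walk u v), p.IsPath → SCList P p.support) := by
  simp only [hT.induce_preconnected_iff, SimpleGraph.isPathConvex_iff_getVert,
    scList_support_iff]
  exact ⟨fun h u v p hp a b => h a b p hp, fun h a b u v p hp => h u v p hp a b⟩
end

section
/- If a profile with an odd number of voters is single-crossing on a tree T, then its majority relation is transitive and coincides with the preference order of some voter in the profile (a representative voter). -/
variable {A : Type*} [Fintype A] [DecidableEq A]

section TreeLemmas

open SimpleGraph

variable {V : Type*} [DecidableEq V] {G : SimpleGraph V}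

/-- In a tree, every path realizes the distance between its endpoints. -/
lemma tree_path_length (hT : G.IsTree) {u v : V} (p : G.Walk u v) (hp : p.IsPath) :
    p.length = G.dist u v := by
  obtain ⟨q, hq, hql⟩ := hT.isConnected.exists_path_of_dist u v
  rw [(hT.existsUnique_path u v).unique hp hq, hql]

/-- In a tree, distances from any vertex to two adjacent vertices differ by exactly one. -/
lemma tree_adj_dist (hT : G.IsTree) {u v : V} (h : G.Adj u v) (x : V) :
    G.dist x u = G.dist x v + 1 ∨ G.dist x v = G.dist x u + 1 := by
  obtain ⟨p, hp, hpl⟩ := hT.isConnected.exists_path_of_dist u x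
  by_cases hv : v ∈ p.support
  · left
    have h1 : (p.takeUntil v hv).length = G.dist u v :=
      tree_path_length hT _ (hp.takeUntil hv)
    have h2 : (p.dropUntil v hv).length = G.dist v x :=
      tree_path_length hT _ (hp.dropUntil hv)
    have h3 := congrArg SimpleGraph.Walk.length (p.take_spec hv)
    rw [SimpleGraph.Walk.length_append, h1, h2, hpl] at h3
    have h4 : G.dist u v = 1 := SimpleGraph.dist_eq_one_iff_adj.mpr h
    have e1 : G.dist x u = G.dist u x := SimpleGraph.dist_comm
    have e2 : G.dist x v = G.dist v x := SimpleGraph.dist_comm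
    omega
  · right
    have hq : (SimpleGraph.Walk.cons h.symm p).IsPath := hp.cons hv
    have hlen := tree_path_length hT _ hq
    rw [SimpleGraph.Walk.length_cons, hpl] at hlen
    have e1 : G.dist x u = G.dist u x := SimpleGraph.dist_comm
    have e2 : G.dist x v = G.dist v x := SimpleGraph.dist_comm
    omega

/-- Key step: being in the branch of `u` at `c` is preserved along edges avoiding `c`. -/
lemma tree_branch_step (hT : G.IsTree) {c u z z' : V} (hcu : G.Adj c u) (hzz : G.Adj z z')
    (hz' : z' ≠ c) (h1 : G.dist c z = G.dist u z + 1) :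
    G.dist c z' = G.dist u z' + 1 := by
  have e1 : G.dist z' u = G.dist u z' := SimpleGraph.dist_comm
  have e2 : G.dist z' c = G.dist c z' := SimpleGraph.dist_comm
  rcases tree_adj_dist hT hcu z' with h2 | h2
  · omega
  · exfalso
    obtain ⟨p, hp, hpl⟩ := hT.isConnected.exists_path_of_dist u z
    have hc : c ∉ p.support := by
      intro hc
      have t1 : (p.takeUntil c hc).length = G.dist u c :=
        tree_path_length hT _ (hp.takeUntil hc)
      have t2 : (p.dropUntil c hc).length = G.dist c z :=
        tree_path_length hT _ (hp.dropUntil hc)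
      have t3 := congrArg SimpleGraph.Walk.length (p.take_spec hc)
      rw [SimpleGraph.Walk.length_append, t1, t2, hpl] at t3
      have t4 : G.dist u c = 1 := SimpleGraph.dist_eq_one_iff_adj.mpr hcu.symm
      omega
    by_cases hz2 : z' ∈ p.support
    · have t1 : (p.takeUntil z' hz2).length = G.dist u z' :=
        tree_path_length hT _ (hp.takeUntil hz2)
      have t2 : (p.dropUntil z' hz2).length = G.dist z' z :=
        tree_path_length hT _ (hp.dropUntil hz2)
      have t3 := congrArg SimpleGraph.Walk.length (p.take_spec hz2)
      rw [SimpleGraph.Walk.length_append, t1, t2, hpl] at t3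
      have t4 : G.dist z' z = 1 := SimpleGraph.dist_eq_one_iff_adj.mpr hzz.symm
      have e3 : G.dist c z = G.dist z c := SimpleGraph.dist_comm
      have e4 : G.dist c z' = G.dist z' c := SimpleGraph.dist_comm
      rcases tree_adj_dist hT hzz c with h3 | h3 <;> omega
    · have hq : (SimpleGraph.Walk.cons hzz.symm p.reverse).IsPath :=
        hp.reverse.cons (by rwa [SimpleGraph.Walk.support_reverse, List.mem_reverse])
      have t1 := tree_path_length hT _ hq
      rw [SimpleGraph.Walk.length_cons, SimpleGraph.Walk.length_reverse, hpl] at t1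
      have hr : (SimpleGraph.Walk.cons hcu
          (SimpleGraph.Walk.cons hzz.symm p.reverse).reverse).IsPath := by
        refine hq.reverse.cons ?_
        rw [SimpleGraph.Walk.support_reverse, List.mem_reverse,
          SimpleGraph.Walk.support_cons]
        simp only [List.mem_cons]
        rintro (rfl | hmem)
        · exact hz' rfl
        · rw [SimpleGraph.Walk.support_reverse, List.mem_reverse] at hmem
          exact hc hmem
      have t2 := tree_path_length hT _ hr
      rw [SimpleGraph.Walk.length_cons, SimpleGraph.Walk.length_reverse,
        SimpleGraph.Walk.length_cons, SimpleGraph.Walk.length_reverse, hpl] at t2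
      omega

/-- Being in the branch of `u` at `c` is preserved along walks in an induced
subgraph avoiding `c`. -/
lemma tree_branch_walk (hT : G.IsTree) {c u : V} (hcu : G.Adj c u) {S : Set V} (hcS : c ∉ S)
    {x y : ↥S} (w : (G.induce S).Walk x y) :
    G.dist c ↑x = G.dist u ↑x + 1 → G.dist c ↑y = G.dist u ↑y + 1 := by
  induction w with
  | nil => exact id
  | @cons a b _ h p ih =>
    intro hx
    have hadj : G.Adj ↑a ↑b := h
    have hb : (↑b : V) ≠ c := fun e => hcS (e ▸ b.2)
    exact ih (tree_branch_step hT hcu hadj hb hx)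

/-- Every tree has a "centroid" vertex belonging to every connected set of more
than half the vertices. -/
lemma tree_centroid [Fintype V] [DecidableEq V] (hT : G.IsTree) :
    ∃ c : V, ∀ S : Finset V, (G.induce (S : Set V)).Preconnected →
      Fintype.card V < 2 * S.card → c ∈ S := by
  classical
  have hne : Nonempty V := hT.isConnected.nonempty
  obtain ⟨c, -, hc⟩ := Finset.exists_min_image Finset.univ
    (fun v => ∑ x, G.dist v x) ⟨Classical.arbitrary V, Finset.mem_univ _⟩
  refine ⟨c, fun S hS hcard => ?_⟩
  by_contra hcS
  have hSne : S.Nonempty := by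
    rcases S.eq_empty_or_nonempty with h | h
    · rw [h] at hcard; simp at hcard
    · exact h
  obtain ⟨s, hs⟩ := hSne
  have hsc : c ≠ s := fun h => hcS (h ▸ hs)
  obtain ⟨p, hp, hpl⟩ := hT.isConnected.exists_path_of_dist c s
  cases p with
  | nil => exact hsc rfl
  | @cons _ u _ h q =>
    have hq : q.IsPath ∧ c ∉ q.support := (SimpleGraph.Walk.cons_isPath_iff h q).mp hp
    have hql := tree_path_length hT q hq.1
    rw [SimpleGraph.Walk.length_cons, hql] at hpl
    have hus : G.dist c s = G.dist u s + 1 := hpl.symm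
    have hbranch : ∀ t ∈ S, G.dist c t = G.dist u t + 1 := by
      intro t ht
      obtain ⟨w⟩ := hS ⟨s, by simpa using hs⟩ ⟨t, by simpa using ht⟩
      exact tree_branch_walk hT h (by simpa using hcS) w hus
    set B := Finset.univ.filter (fun x => G.dist c x = G.dist u x + 1) with hB
    have hSB : S ⊆ B := fun t ht =>
      Finset.mem_filter.2 ⟨Finset.mem_univ _, hbranch t ht⟩
    have hcard2 : Fintype.card V < 2 * B.card :=
      lt_of_lt_of_le hcard (Nat.mul_le_mul_left _ (Finset.card_le_card hSB))
    have key : ∀ x : V, G.dist u x + (if x ∈ B then 1 else 0)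
        = G.dist c x + (if x ∈ B then 0 else 1) := by
      intro x
      by_cases hx : x ∈ B
      · have := (Finset.mem_filter.mp hx).2
        simp [hx, this]
      · have hnot : ¬ (G.dist c x = G.dist u x + 1) := by
          intro hcon
          exact hx (Finset.mem_filter.2 ⟨Finset.mem_univ _, hcon⟩)
        have ec : G.dist x c = G.dist c x := SimpleGraph.dist_comm
        have eu : G.dist x u = G.dist u x := SimpleGraph.dist_comm
        rcases tree_adj_dist hT h x with h3 | h3
        · exact absurd (by omega) hnot
        · simp only [if_neg hx]
          omega
    have hsum : (∑ x, G.dist u x) + (∑ x, (if x ∈ B then (1:ℕ) else 0))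
        = (∑ x, G.dist c x) + (∑ x, (if x ∈ B then (0:ℕ) else 1)) := by
      rw [← Finset.sum_add_distrib, ← Finset.sum_add_distrib]
      exact Finset.sum_congr rfl (fun x _ => key x)
    have e1 : (∑ x, (if x ∈ B then (1:ℕ) else 0)) = B.card := by
      rw [Finset.sum_ite_mem, Finset.univ_inter, Finset.sum_const, smul_eq_mul, mul_one]
    have e12 : (∑ x, (if x ∈ B then (1:ℕ) else 0))
        + (∑ x, (if x ∈ B then (0:ℕ) else 1)) = Fintype.card V := by
      rw [← Finset.sum_add_distrib]
      have : ∀ x : V, (if x ∈ B then (1:ℕ) else 0) + (if x ∈ B then (0:ℕ) else 1) = 1 := by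
        intro x; split_ifs <;> rfl
      rw [Finset.sum_congr rfl (fun x _ => this x), Finset.sum_const, smul_eq_mul,
        mul_one, Finset.card_univ]
    have hmin := hc u (Finset.mem_univ u)
    set Su := ∑ x, G.dist u x
    set Sc := ∑ x, G.dist c x
    set E1 := ∑ x, (if x ∈ B then (1:ℕ) else 0)
    set E2 := ∑ x, (if x ∈ B then (0:ℕ) else 1)
    omega

end TreeLemmas

/-- If a profile with an odd number of voters is single-crossing on a tree `G`
on the voters (for each pair of alternatives, the set of voters preferring one
to the other is connected in `G`), then its majority relation is transitive and
coincides with the preference order of some voter (a representative voter). -/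
theorem representative_voter_on_tree {n : ℕ} (hodd : Odd n)
    (G : SimpleGraph (Fin n)) (hT : G.IsTree) (P : Fin n → Vote A)
    (hsc : ∀ a b : A, (G.induce {i : Fin n | P i a < P i b}).Preconnected) :
    Transitive (strictMaj P) ∧
    ∃ i : Fin n, ∀ a b : A, strictMaj P a b ↔ P i a < P i b := by
  classical
  obtain ⟨c, hcen⟩ := tree_centroid hT
  have hsplit : ∀ a b : A, a ≠ b →
      (Finset.univ.filter fun i => P i a < P i b).card
        + (Finset.univ.filter fun i => P i b < P i a).card = n := by
    intro a b hab
    have hcongr : (Finset.univ.filter fun i => P i b < P i a)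
        = Finset.univ.filter fun i => ¬ (P i a < P i b) := by
      apply Finset.filter_congr
      intro i _
      have hne : P i b ≠ P i a := fun e => hab ((P i).injective e.symm)
      constructor
      · exact fun h => not_lt.mpr (le_of_lt h)
      · exact fun h => lt_of_le_of_ne (not_lt.mp h) hne
    rw [hcongr, Finset.card_filter_add_card_filter_not, Finset.card_univ,
      Fintype.card_fin]
  have hforward : ∀ a b, strictMaj P a b → P c a < P c b := by
    intro a b hm
    have hab : a ≠ b := by
      rintro rfl
      exact lt_irrefl _ hm
    have hcards := hsplit a b hab
    have hlt : n < 2 * (Finset.univ.filter fun i => P i a < P i b).card := by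
      unfold strictMaj at hm; omega
    have hconn : (G.induce ((Finset.univ.filter fun i => P i a < P i b : Finset (Fin n))
        : Set (Fin n))).Preconnected := by
      have hset : ((Finset.univ.filter fun i => P i a < P i b : Finset (Fin n))
          : Set (Fin n)) = {i : Fin n | P i a < P i b} := by
        ext i; simp
      rw [hset]
      exact hsc a b
    have hmem := hcen (Finset.univ.filter fun i => P i a < P i b) hconn
      (by simpa [Fintype.card_fin] using hlt)
    exact (Finset.mem_filter.mp hmem).2
  have htot : ∀ a b, a ≠ b → strictMaj P a b ∨ strictMaj P b a := by
    intro a b hab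
    have hcards := hsplit a b hab
    obtain ⟨k, hk⟩ := hodd
    unfold strictMaj
    omega
  have hiff : ∀ a b, strictMaj P a b ↔ P c a < P c b := by
    intro a b
    refine ⟨hforward a b, fun h => ?_⟩
    have hab : a ≠ b := by
      rintro rfl
      exact lt_irrefl _ h
    rcases htot a b hab with hm | hm
    · exact hm
    · exact ((lt_asymm (hforward b a hm)) h).elim
  refine ⟨?_, c, hiff⟩
  intro a b d hab hbd
  exact (hiff a d).mpr (lt_trans ((hiff a b).mp hab) ((hiff b d).mp hbd))
end

section
/- If a profile P = (v_1, ..., v_n) is narcissistic (every alternative is ranked first by some voter) and single-crossing with respect to the given voter ordering, then P is single-peaked with respect to the axis given by the linear order v_1 of the first voter. -/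
variable {A : Type*} [Fintype A] [DecidableEq A] [Nonempty A]

/-- A narcissistic profile that is single-crossing with respect to the given
voter ordering is single-peaked with respect to the axis given by the first
voter's preference order (no voter has a valley w.r.t. that axis). -/
theorem narcissistic_singleCrossing_singlePeaked {n : ℕ} (hn : 0 < n)
    (P : Fin n → Vote A)
    (hnarc : ∀ c : A, ∃ i : Fin n, top (P i) = c)
    (hsc : SCGivenOrder P) :
    ∀ (i : Fin n) (a b c : A),
      P ⟨0, hn⟩ a < P ⟨0, hn⟩ b → P ⟨0, hn⟩ b < P ⟨0, hn⟩ c →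
      ¬(P i a < P i b ∧ P i c < P i b) := by
  intro i a b c hab hbc ⟨h1, h2⟩
  obtain ⟨j, hj⟩ := hnarc b
  have hjb : P j b = ⟨0, Fintype.card_pos⟩ := by
    have := congrArg (P j) hj
    simpa [top] using this.symm
  have hane : a ≠ b := fun h => by simp [h] at hab
  have hcne : c ≠ b := fun h => by simp [h] at hbc
  have htop : ∀ x : A, x ≠ b → P j b < P j x := by
    intro x hx
    rw [Fin.lt_def, hjb]
    refine Nat.pos_of_ne_zero fun h0 => hx ((P j).injective ?_)
    rw [hjb]; exact Fin.ext h0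
  have hij : i ≤ j := by
    by_contra hle
    push_neg at hle
    have := hsc a b ⟨0, hn⟩ j i (by exact Fin.mk_le_mk.mpr (Nat.zero_le _) : (⟨0, hn⟩ : Fin n) ≤ j) hle.le hab h1
    exact absurd this (not_lt.mpr (htop a hane).le)
  have := hsc b c ⟨0, hn⟩ i j (by exact Fin.mk_le_mk.mpr (Nat.zero_le _) : (⟨0, hn⟩ : Fin n) ≤ i) hij hbc (htop c hcne)
  exact absurd h2 (not_lt.mpr this.le)
end

section
/- A profile P over A is value-restricted (i.e., for every triple of alternatives, some alternative in the triple is never ranked first, or never second, or never third among the triple by any voter) if and only if P does not contain a Condorcet configuration: three voters i,j,k and three alternatives a,b,c such that restricted to {a,b,c}, voter i ranks a ≻ b ≻ c, voter j ranks b ≻ c ≻ a, and voter k ranks c ≻ a ≻ b. -/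
variable {A : Type*} [Fintype A] [DecidableEq A]

/-- `x` is never ranked first among the triple `{a,b,c}`: in every vote, some
other member of the triple is ranked above `x`. -/
def NeverFirst {n : ℕ} (P : Fin n → Vote A) (x a b c : A) : Prop :=
  ∀ i : Fin n, ∃ y ∈ ({a, b, c} : Finset A), y ≠ x ∧ P i y < P i x

/-- `x` is never ranked last among the triple `{a,b,c}`. -/
def NeverThird {n : ℕ} (P : Fin n → Vote A) (x a b c : A) : Prop :=
  ∀ i : Fin n, ∃ y ∈ ({a, b, c} : Finset A), y ≠ x ∧ P i x < P i y

/-- `x` is never ranked second among the triple `{a,b,c}`: in no vote does `x`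
have both a triple member above it and a triple member below it. -/
def NeverSecond {n : ℕ} (P : Fin n → Vote A) (x a b c : A) : Prop :=
  ∀ i : Fin n,
    ¬((∃ y ∈ ({a, b, c} : Finset A), y ≠ x ∧ P i y < P i x) ∧
      (∃ y ∈ ({a, b, c} : Finset A), y ≠ x ∧ P i x < P i y))

/-- `P` is value-restricted: for every triple of distinct alternatives, some
member of the triple is never ranked first, or never second, or never third
among the triple. -/
def ValueRestricted {n : ℕ} (P : Fin n → Vote A) : Prop :=
  ∀ a b c : A, a ≠ b → b ≠ c → a ≠ c →
    ∃ x ∈ ({a, b, c} : Finset A),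
      NeverFirst P x a b c ∨ NeverSecond P x a b c ∨ NeverThird P x a b c

/-- `P` contains a Condorcet configuration: three voters and three alternatives
whose restricted orders form a Condorcet cycle. -/
def CondorcetConfig {n : ℕ} (P : Fin n → Vote A) : Prop :=
  ∃ (i j k : Fin n) (a b c : A),
    (P i a < P i b ∧ P i b < P i c) ∧
    (P j b < P j c ∧ P j c < P j a) ∧
    (P k c < P k a ∧ P k a < P k b)

/-- Propositional core: if among the six possible restricted orders
(0=abc, 1=acb, 2=bac, 3=cab, 4=bca, 5=cba) every alternative occurs in every
position, then one of the two cyclic triples is fully present. -/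
lemma six_orders {q0 q1 q2 q3 q4 q5 : Prop}
    (h1 : q0 ∨ q1) (h2 : q2 ∨ q3) (h3 : q4 ∨ q5)
    (h4 : q2 ∨ q4) (h5 : q0 ∨ q5) (h6 : q1 ∨ q3)
    (h7 : q3 ∨ q5) (h8 : q1 ∨ q4) (h9 : q0 ∨ q2) :
    (q0 ∧ q4 ∧ q3) ∨ (q1 ∧ q5 ∧ q2) := by tauto

lemma lt_of_ne_of_not_lt {n : ℕ} (P : Fin n → Vote A) (i : Fin n) {x y : A}
    (hxy : x ≠ y) (h : ¬ P i y < P i x) : P i x < P i y := by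
  rcases lt_trichotomy (P i x) (P i y) with h' | h' | h'
  · exact h'
  · exact absurd ((P i).injective h') hxy
  · exact absurd h' h

/-- A profile is value-restricted iff it contains no Condorcet configuration. -/
theorem valueRestricted_iff_no_condorcetConfig {n : ℕ} (P : Fin n → Vote A) :
    ValueRestricted P ↔ ¬ CondorcetConfig P := by
  constructor
  · rintro hVR ⟨i, j, k, a, b, c, ⟨hi1, hi2⟩, ⟨hj1, hj2⟩, ⟨hk1, hk2⟩⟩
    have hab : a ≠ b := fun h => absurd (congrArg (P i) h) (ne_of_lt hi1)
    have hbc : b ≠ c := fun h => absurd (congrArg (P i) h) (ne_of_lt hi2)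
    have hac : a ≠ c := fun h => absurd (congrArg (P i) h) (ne_of_lt (hi1.trans hi2))
    obtain ⟨x, hxmem, hx⟩ := hVR a b c hab hbc hac
    simp only [Finset.mem_insert, Finset.mem_singleton] at hxmem
    rcases hxmem with rfl | rfl | rfl
    · rcases hx with hx | hx | hx
      · -- x = a is never first, but voter i ranks a first
        obtain ⟨y, hy, hyx, hlt⟩ := hx i
        simp only [Finset.mem_insert, Finset.mem_singleton] at hy
        rcases hy with rfl | rfl | rfl
        · exact hyx rfl
        · exact absurd hlt (asymm hi1)
        · exact absurd hlt (asymm (hi1.trans hi2))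
      · -- a never second, but voter k has c < a < b
        exact hx k ⟨⟨c, by simp, hac.symm, hk1⟩, ⟨b, by simp, hab.symm, hk2⟩⟩
      · -- a never third, but voter j has a last
        obtain ⟨y, hy, hyx, hlt⟩ := hx j
        simp only [Finset.mem_insert, Finset.mem_singleton] at hy
        rcases hy with rfl | rfl | rfl
        · exact hyx rfl
        · exact absurd hlt (asymm (hj1.trans hj2))
        · exact absurd hlt (asymm hj2)
    · rcases hx with hx | hx | hx
      · -- b never first, but voter j ranks b first
        obtain ⟨y, hy, hyx, hlt⟩ := hx j
        simp only [Finset.mem_insert, Finset.mem_singleton] at hy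
        rcases hy with rfl | rfl | rfl
        · exact absurd hlt (asymm (hj1.trans hj2))
        · exact hyx rfl
        · exact absurd hlt (asymm hj1)
      · -- b never second, but voter i has a < b < c
        exact hx i ⟨⟨a, by simp, hab, hi1⟩, ⟨c, by simp, hbc.symm, hi2⟩⟩
      · -- b never third, but voter k has b last
        obtain ⟨y, hy, hyx, hlt⟩ := hx k
        simp only [Finset.mem_insert, Finset.mem_singleton] at hy
        rcases hy with rfl | rfl | rfl
        · exact absurd hlt (asymm hk2)
        · exact hyx rfl
        · exact absurd hlt (asymm (hk1.trans hk2))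
    · rcases hx with hx | hx | hx
      · -- c never first, but voter k ranks c first
        obtain ⟨y, hy, hyx, hlt⟩ := hx k
        simp only [Finset.mem_insert, Finset.mem_singleton] at hy
        rcases hy with rfl | rfl | rfl
        · exact absurd hlt (asymm hk1)
        · exact absurd hlt (asymm (hk1.trans hk2))
        · exact hyx rfl
      · -- c never second, but voter j has b < c < a
        exact hx j ⟨⟨b, by simp, hbc, hj1⟩, ⟨a, by simp, hac, hj2⟩⟩
      · -- c never third, but voter i has c last
        obtain ⟨y, hy, hyx, hlt⟩ := hx i
        simp only [Finset.mem_insert, Finset.mem_singleton] at hy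
        rcases hy with rfl | rfl | rfl
        · exact absurd hlt (asymm (hi1.trans hi2))
        · exact absurd hlt (asymm hi2)
        · exact hyx rfl
  · intro hNC
    intro a b c hab hbc hac
    by_contra h
    push_neg at h
    have ha := h a (by simp)
    have hb := h b (by simp)
    have hc := h c (by simp)
    -- extract: each of a,b,c is sometimes first, sometimes middle, sometimes last
    -- orders: q0=abc, q1=acb, q2=bac, q3=cab, q4=bca, q5=cba
    -- a first
    have H1 : (∃ i, P i a < P i b ∧ P i b < P i c) ∨
              (∃ i, P i a < P i c ∧ P i c < P i b) := by
      obtain ⟨i, hi⟩ := not_forall.mp ha.1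
      have h1 : P i a < P i b := lt_of_ne_of_not_lt P i hab
        (fun hl => hi ⟨b, by simp, hab.symm, hl⟩)
      have h2 : P i a < P i c := lt_of_ne_of_not_lt P i hac
        (fun hl => hi ⟨c, by simp, hac.symm, hl⟩)
      rcases lt_trichotomy (P i b) (P i c) with h' | h' | h'
      · exact Or.inl ⟨i, h1, h'⟩
      · exact absurd ((P i).injective h') hbc
      · exact Or.inr ⟨i, h2, h'⟩
    -- a middle
    have H2 : (∃ i, P i b < P i a ∧ P i a < P i c) ∨
              (∃ i, P i c < P i a ∧ P i a < P i b) := by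
      obtain ⟨i, hns⟩ := not_forall.mp ha.2.1
      obtain ⟨⟨y, hy, hya, hy1⟩, ⟨z, hz, hza, hz1⟩⟩ := not_not.mp hns
      simp only [Finset.mem_insert, Finset.mem_singleton] at hy hz
      have hyz : y ≠ z := fun h => absurd (h ▸ hy1.trans hz1) (lt_irrefl _)
      rcases hy with rfl | rfl | rfl
      · exact absurd rfl hya
      · rcases hz with rfl | rfl | rfl
        · exact absurd rfl hza
        · exact absurd rfl hyz
        · exact Or.inl ⟨i, hy1, hz1⟩
      · rcases hz with rfl | rfl | rfl
        · exact absurd rfl hza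
        · exact Or.inr ⟨i, hy1, hz1⟩
        · exact absurd rfl hyz
    -- a last
    have H3 : (∃ i, P i b < P i c ∧ P i c < P i a) ∨
              (∃ i, P i c < P i b ∧ P i b < P i a) := by
      obtain ⟨i, hi⟩ := not_forall.mp ha.2.2
      have h1 : P i b < P i a := lt_of_ne_of_not_lt P i hab.symm
        (fun hl => hi ⟨b, by simp, hab.symm, hl⟩)
      have h2 : P i c < P i a := lt_of_ne_of_not_lt P i hac.symm
        (fun hl => hi ⟨c, by simp, hac.symm, hl⟩)
      rcases lt_trichotomy (P i b) (P i c) with h' | h' | h'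
      · exact Or.inl ⟨i, h', h2⟩
      · exact absurd ((P i).injective h') hbc
      · exact Or.inr ⟨i, h', h1⟩
    -- b first : q2 (bac) or q4 (bca)
    have H4 : (∃ i, P i b < P i a ∧ P i a < P i c) ∨
              (∃ i, P i b < P i c ∧ P i c < P i a) := by
      obtain ⟨i, hi⟩ := not_forall.mp hb.1
      have h1 : P i b < P i a := lt_of_ne_of_not_lt P i hab.symm
        (fun hl => hi ⟨a, by simp, hab, hl⟩)
      have h2 : P i b < P i c := lt_of_ne_of_not_lt P i hbc
        (fun hl => hi ⟨c, by simp, hbc.symm, hl⟩)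
      rcases lt_trichotomy (P i a) (P i c) with h' | h' | h'
      · exact Or.inl ⟨i, h1, h'⟩
      · exact absurd ((P i).injective h') hac
      · exact Or.inr ⟨i, h2, h'⟩
    -- b middle : q0 (abc) or q5 (cba)
    have H5 : (∃ i, P i a < P i b ∧ P i b < P i c) ∨
              (∃ i, P i c < P i b ∧ P i b < P i a) := by
      obtain ⟨i, hns⟩ := not_forall.mp hb.2.1
      obtain ⟨⟨y, hy, hyb, hy1⟩, ⟨z, hz, hzb, hz1⟩⟩ := not_not.mp hns
      simp only [Finset.mem_insert, Finset.mem_singleton] at hy hz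
      have hyz : y ≠ z := fun h => absurd (h ▸ hy1.trans hz1) (lt_irrefl _)
      rcases hy with rfl | rfl | rfl
      · rcases hz with rfl | rfl | rfl
        · exact absurd rfl hyz
        · exact absurd rfl hzb
        · exact Or.inl ⟨i, hy1, hz1⟩
      · exact absurd rfl hyb
      · rcases hz with rfl | rfl | rfl
        · exact Or.inr ⟨i, hy1, hz1⟩
        · exact absurd rfl hzb
        · exact absurd rfl hyz
    -- b last : q1 (acb) or q3 (cab)
    have H6 : (∃ i, P i a < P i c ∧ P i c < P i b) ∨
              (∃ i, P i c < P i a ∧ P i a < P i b) := by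
      obtain ⟨i, hi⟩ := not_forall.mp hb.2.2
      have h1 : P i a < P i b := lt_of_ne_of_not_lt P i hab
        (fun hl => hi ⟨a, by simp, hab, hl⟩)
      have h2 : P i c < P i b := lt_of_ne_of_not_lt P i hbc.symm
        (fun hl => hi ⟨c, by simp, hbc.symm, hl⟩)
      rcases lt_trichotomy (P i a) (P i c) with h' | h' | h'
      · exact Or.inl ⟨i, h', h2⟩
      · exact absurd ((P i).injective h') hac
      · exact Or.inr ⟨i, h', h1⟩
    -- c first : q3 (cab) or q5 (cba)
    have H7 : (∃ i, P i c < P i a ∧ P i a < P i b) ∨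
              (∃ i, P i c < P i b ∧ P i b < P i a) := by
      obtain ⟨i, hi⟩ := not_forall.mp hc.1
      have h1 : P i c < P i a := lt_of_ne_of_not_lt P i hac.symm
        (fun hl => hi ⟨a, by simp, hac, hl⟩)
      have h2 : P i c < P i b := lt_of_ne_of_not_lt P i hbc.symm
        (fun hl => hi ⟨b, by simp, hbc, hl⟩)
      rcases lt_trichotomy (P i a) (P i b) with h' | h' | h'
      · exact Or.inl ⟨i, h1, h'⟩
      · exact absurd ((P i).injective h') hab
      · exact Or.inr ⟨i, h2, h'⟩
    -- c middle : q1 (acb) or q4 (bca)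
    have H8 : (∃ i, P i a < P i c ∧ P i c < P i b) ∨
              (∃ i, P i b < P i c ∧ P i c < P i a) := by
      obtain ⟨i, hns⟩ := not_forall.mp hc.2.1
      obtain ⟨⟨y, hy, hyc, hy1⟩, ⟨z, hz, hzc, hz1⟩⟩ := not_not.mp hns
      simp only [Finset.mem_insert, Finset.mem_singleton] at hy hz
      have hyz : y ≠ z := fun h => absurd (h ▸ hy1.trans hz1) (lt_irrefl _)
      rcases hy with rfl | rfl | rfl
      · rcases hz with rfl | rfl | rfl
        · exact absurd rfl hyz
        · exact Or.inl ⟨i, hy1, hz1⟩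
        · exact absurd rfl hzc
      · rcases hz with rfl | rfl | rfl
        · exact Or.inr ⟨i, hy1, hz1⟩
        · exact absurd rfl hyz
        · exact absurd rfl hzc
      · exact absurd rfl hyc
    -- c last : q0 (abc) or q2 (bac)
    have H9 : (∃ i, P i a < P i b ∧ P i b < P i c) ∨
              (∃ i, P i b < P i a ∧ P i a < P i c) := by
      obtain ⟨i, hi⟩ := not_forall.mp hc.2.2
      have h1 : P i a < P i c := lt_of_ne_of_not_lt P i hac
        (fun hl => hi ⟨a, by simp, hac, hl⟩)
      have h2 : P i b < P i c := lt_of_ne_of_not_lt P i hbc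
        (fun hl => hi ⟨b, by simp, hbc, hl⟩)
      rcases lt_trichotomy (P i a) (P i b) with h' | h' | h'
      · exact Or.inl ⟨i, h', h2⟩
      · exact absurd ((P i).injective h') hab
      · exact Or.inr ⟨i, h', h1⟩
    rcases six_orders H1 H2 H3 H4 H5 H6 H7 H8 H9 with
      ⟨⟨i, hi⟩, ⟨j, hj⟩, ⟨k, hk⟩⟩ | ⟨⟨i, hi⟩, ⟨j, hj⟩, ⟨k, hk⟩⟩
    · exact hNC ⟨i, j, k, a, b, c, hi, hj, hk⟩
    · exact hNC ⟨i, j, k, a, c, b, hi, hj, hk⟩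
end

section
/- The majority relation of a value-restricted profile with an odd number of voters is transitive. -/
variable {A : Type*} [Fintype A] [DecidableEq A]

lemma pair_card_sum {n : ℕ} (P : Fin n → Vote A) {a b : A} (hab : a ≠ b) :
    (Finset.univ.filter fun i : Fin n => P i a < P i b).card +
    (Finset.univ.filter fun i : Fin n => P i b < P i a).card = n := by
  have h : (Finset.univ.filter fun i : Fin n => P i b < P i a)
      = Finset.univ.filter fun i : Fin n => ¬ (P i a < P i b) := by
    apply Finset.filter_congr
    intro i _
    have hne : P i a ≠ P i b := fun h => hab ((P i).injective h)
    constructor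
    · exact fun h => h.asymm
    · exact fun h => (lt_or_gt_of_ne hne).resolve_left h
  rw [h]
  simpa using Finset.card_filter_add_card_filter_not
    (s := (Finset.univ : Finset (Fin n))) (p := fun i => P i a < P i b)

lemma inter_exists {n : ℕ} {S T : Finset (Fin n)} (h : n < S.card + T.card) :
    ∃ i, i ∈ S ∧ i ∈ T := by
  have h1 : (S ∪ T).card + (S ∩ T).card = S.card + T.card :=
    Finset.card_union_add_card_inter S T
  have h2 : (S ∪ T).card ≤ n := by
    simpa using Finset.card_le_card (Finset.subset_univ (S ∪ T))
  have h3 : 0 < (S ∩ T).card := by omega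
  obtain ⟨i, hi⟩ := Finset.card_pos.mp h3
  exact ⟨i, Finset.mem_inter.mp hi⟩

/-- The majority relation of a value-restricted profile (no Condorcet
configuration) with an odd number of voters is transitive. -/
theorem valueRestricted_majority_transitive {n : ℕ} (hodd : Odd n)
    (P : Fin n → Vote A) (hvr : ¬ CondorcetConfig P) :
    Transitive (strictMaj P) := by
  intro a b c hab hbc
  by_contra hac
  have hab' : a ≠ b := by rintro rfl; exact lt_irrefl _ hab
  have hbc' : b ≠ c := by rintro rfl; exact lt_irrefl _ hbc
  have hac' : a ≠ c := by rintro rfl; exact lt_asymm hab hbc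
  set S1 := Finset.univ.filter fun i : Fin n => P i a < P i b with hS1
  set S2 := Finset.univ.filter fun i : Fin n => P i b < P i c with hS2
  set S3 := Finset.univ.filter fun i : Fin n => P i c < P i a with hS3
  have e1 := pair_card_sum P hab'
  have e2 := pair_card_sum P hbc'
  have e3 := pair_card_sum P hac'.symm
  unfold strictMaj at hab hbc hac
  obtain ⟨m, hm⟩ := hodd
  have c1 : n < S1.card + S2.card := by
    simp only [← hS1, ← hS2] at *; omega
  have c2 : n < S2.card + S3.card := by
    simp only [← hS1, ← hS2, ← hS3] at *; omega
  have c3 : n < S3.card + S1.card := by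
    simp only [← hS1, ← hS2, ← hS3] at *; omega
  obtain ⟨i, hi1, hi2⟩ := inter_exists c1
  obtain ⟨j, hj2, hj3⟩ := inter_exists c2
  obtain ⟨k, hk3, hk1⟩ := inter_exists c3
  simp only [hS1, hS2, hS3, Finset.mem_filter] at hi1 hi2 hj2 hj3 hk3 hk1
  exact hvr ⟨i, j, k, a, b, c, ⟨hi1.2, hi2.2⟩, ⟨hj2.2, hj3.2⟩, ⟨hk3.2, hk1.2⟩⟩
end

section
/- A group-separable profile over m alternatives contains at most 2^(m−1) pairwise distinct votes, and this bound is tight: for every m ≥ 2 there is a group-separable profile over m alternatives containing exactly 2^(m−1) distinct votes. -/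
/-- `P` is group-separable: for every subset `A'` of the alternatives with at
least two elements, there is a nonempty proper subset `B` of `A'` such that
every voter ranks all of `B` above all of `A' \ B`, or all of `A' \ B` above
all of `B`. -/
def GroupSeparable {A : Type*} [Fintype A] [DecidableEq A] {n : ℕ}
    (P : Fin n → Vote A) : Prop :=
  ∀ A' : Finset A, 2 ≤ A'.card →
    ∃ B : Finset A, B ⊆ A' ∧ B.Nonempty ∧ B ≠ A' ∧
      ∀ i : Fin n,
        (∀ a ∈ B, ∀ b ∈ A' \ B, P i a < P i b) ∨
        (∀ a ∈ B, ∀ b ∈ A' \ B, P i b < P i a)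

/-!
Restrict every vote to a set `S` of alternatives. If `S` splits into `B` and `S \ B` as in the
definition of group-separability, the restriction of a vote to `S` is determined by its
restrictions to `B` and to `S \ B` and by one bit, which of the two blocks it ranks on top. By
induction on `S` at most `2 ^ (|S| - 1)` restrictions occur, and on the full set of alternatives
the restriction is the vote itself.

For the tight examples, give each alternative `a` of `Fin m` a sign and rank by the key `±a`.
Every alternative is then above or below all smaller ones, so separating off the maximum of any
subset witnesses group-separability; fixing the (irrelevant) sign of `0` leaves `2 ^ (m - 1)` sign
patterns, which give pairwise distinct votes.
-/

open Finset Function Set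

theorem ncard_range_le_mul_of_factor {ι α β γ : Type*} [Finite ι] {f : ι → α} {g : ι → β}
    {h : ι → γ} (Φ : β → γ → α) (hf : ∀ i, f i = Φ (g i) (h i)) :
    (range f).ncard ≤ (range g).ncard * (range h).ncard := by
  have hsub : range f ⊆ uncurry Φ '' (range g ×ˢ range h) := by
    rintro _ ⟨i, rfl⟩
    exact ⟨(g i, h i), ⟨mem_range_self i, mem_range_self i⟩, (hf i).symm⟩
  calc (range f).ncard ≤ (uncurry Φ '' (range g ×ˢ range h)).ncard := ncard_le_ncard hsub
    _ ≤ (range g ×ˢ range h).ncard := ncard_image_le ((finite_range g).prod (finite_range h))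
    _ = (range g).ncard * (range h).ncard := ncard_prod

theorem ncard_range_prop_le_two {ι : Type*} (p : ι → Prop) : (range p).ncard ≤ 2 :=
  (ncard_le_card _).trans_eq (Nat.card_eq_fintype_card.trans Fintype.card_prop)

theorem Vote.ext_of_lt_iff_s18 {A : Type*} [Fintype A] {v w : Vote A}
    (h : ∀ a b, v a < v b ↔ w a < w b) : v = w := by
  have hmono : StrictMono (v.symm.trans w) := fun i j hij => by
    simpa using (h (v.symm i) (v.symm j)).mp (by simpa using hij)
  have hid : ⇑(v.symm.trans w) = id :=
    (hmono.range_inj strictMono_id).mp (by simp)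
  exact Equiv.ext fun a => by simpa using (congrFun hid (v a)).symm

def joinPref {A : Type*} (B C : Finset A) (r s : A → A → Prop) (above : Prop) (a b : A) : Prop :=
  r a b ∨ s a b ∨ (above ∧ a ∈ B ∧ b ∈ C) ∨ (¬above ∧ a ∈ C ∧ b ∈ B)

section UpperBound

variable {A : Type*} [Fintype A]

def restrictPref (v : Vote A) (S : Finset A) (a b : A) : Prop :=
  a ∈ S ∧ b ∈ S ∧ v a < v b

theorem restrictPref_eq_joinPref [DecidableEq A] {v : Vote A} {S B : Finset A} {above : Prop}
    (hBS : B ⊆ S)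
    (hab : above → ∀ a ∈ B, ∀ b ∈ S \ B, v a < v b)
    (hba : ¬above → ∀ a ∈ B, ∀ b ∈ S \ B, v b < v a) :
    restrictPref v S = joinPref B (S \ B) (restrictPref v B) (restrictPref v (S \ B)) above := by
  ext a b
  simp only [restrictPref, joinPref]
  by_cases h : above <;> grind

theorem restrictPref_of_card_le_one (v : Vote A) {S : Finset A} (hS : S.card ≤ 1) :
    restrictPref v S = fun _ _ => False := by
  ext a b
  simp only [restrictPref, iff_false, not_and]
  intro ha hb
  rw [Finset.card_le_one.mp hS a ha b hb]
  exact lt_irrefl _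

theorem ncard_range_restrictPref_le [DecidableEq A] {n : ℕ} {P : Fin n → Vote A}
    (hP : GroupSeparable P) (S : Finset A) :
    (range fun i => restrictPref (P i) S).ncard ≤ 2 ^ (S.card - 1) := by
  induction S using Finset.strongInduction with
  | H S ih =>
  by_cases hS : S.card ≤ 1
  · calc (range fun i => restrictPref (P i) S).ncard
        ≤ ({fun _ _ => False} : Set (A → A → Prop)).ncard :=
          ncard_le_ncard (range_subset_singleton.mpr
            (funext fun i => restrictPref_of_card_le_one (P i) hS))
      _ ≤ 2 ^ (S.card - 1) := (ncard_singleton _).trans_le Nat.one_le_two_pow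
  obtain ⟨B, hBS, hBne, hBS', hsep⟩ := hP S (by omega)
  set C := S \ B
  have hcard : C.card + B.card = S.card := card_sdiff_add_card_eq_card hBS
  have hB : B.card ≠ 0 := (card_pos.mpr hBne).ne'
  have hC : C.card ≠ 0 := by
    have := card_lt_card (ssubset_of_subset_of_ne hBS hBS')
    omega
  calc (range fun i => restrictPref (P i) S).ncard
      ≤ (range fun i => restrictPref (P i) B).ncard *
          (range fun i => (restrictPref (P i) C, ∀ a ∈ B, ∀ b ∈ C, P i a < P i b)).ncard :=
        ncard_range_le_mul_of_factor (fun r p => joinPref B C r p.1 p.2) fun i =>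
          restrictPref_eq_joinPref hBS id (hsep i).resolve_left
    _ ≤ (range fun i => restrictPref (P i) B).ncard *
          ((range fun i => restrictPref (P i) C).ncard *
            (range fun i => ∀ a ∈ B, ∀ b ∈ C, P i a < P i b).ncard) :=
        Nat.mul_le_mul_left _ (ncard_range_le_mul_of_factor Prod.mk fun _ => rfl)
    _ ≤ 2 ^ (B.card - 1) * (2 ^ (C.card - 1) * 2) := by
        gcongr
        · exact ih B (ssubset_of_subset_of_ne hBS hBS')
        · exact ih C (sdiff_ssubset hBS hBne)
        · exact ncard_range_prop_le_two _
    _ = 2 ^ (S.card - 1) := by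
        rw [← pow_succ, ← pow_add]
        congr 1
        omega

theorem ncard_range_le_of_groupSeparable [DecidableEq A] {n : ℕ} {P : Fin n → Vote A}
    (hP : GroupSeparable P) : (range P).ncard ≤ 2 ^ (Fintype.card A - 1) := by
  have hinj : Injective fun v : Vote A => restrictPref v univ := fun v w h =>
    Vote.ext_of_lt_iff_s18 fun a b => by simpa [restrictPref] using congrFun₂ h a b
  rw [← ncard_image_of_injective _ hinj, ← range_comp, ← card_univ]
  exact ncard_range_restrictPref_le hP univ

end UpperBound

def voteOfKey {A β : Type*} [Fintype A] [LinearOrder β] (k : A → β) (hk : Injective k) :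
    Vote A :=
  letI := LinearOrder.lift' k hk
  (Fintype.orderIsoFinOfCardEq A rfl).symm.toEquiv

theorem voteOfKey_lt_iff {A β : Type*} [Fintype A] [LinearOrder β] {k : A → β}
    (hk : Injective k) {a b : A} : voteOfKey k hk a < voteOfKey k hk b ↔ k a < k b :=
  letI := LinearOrder.lift' k hk
  (Fintype.orderIsoFinOfCardEq A rfl).symm.lt_iff_lt

theorem groupSeparable_of_extreme_among_smaller {A : Type*} [Fintype A] [LinearOrder A]
    [DecidableEq A] {n : ℕ} {P : Fin n → Vote A}
    (hP : ∀ i a, (∀ b < a, P i a < P i b) ∨ (∀ b < a, P i b < P i a)) : GroupSeparable P := by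
  intro S hS
  have hne : S.Nonempty := card_pos.mp (by omega)
  have hlt : ∀ b ∈ S \ {S.max' hne}, b < S.max' hne := fun b hb => by
    rw [Finset.mem_sdiff, Finset.mem_singleton] at hb
    exact lt_of_le_of_ne (S.le_max' b hb.1) hb.2
  refine ⟨{S.max' hne}, singleton_subset_iff.mpr (S.max'_mem hne), singleton_nonempty _,
    fun h => by rw [← h, Finset.card_singleton] at hS; omega, fun i => ?_⟩
  simp only [Finset.mem_singleton, forall_eq]
  exact (hP i _).imp (fun h b hb => h b (hlt b hb)) (fun h b hb => h b (hlt b hb))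

def signedKey {m : ℕ} (ε : Fin m → Bool) (a : Fin m) : ℤ := if ε a then -a else a

theorem signedKey_injective {m : ℕ} (ε : Fin m → Bool) : Injective (signedKey ε) := by
  intro a b h
  apply Fin.ext
  unfold signedKey at h
  split_ifs at h <;> omega

theorem signedKey_extreme_among_smaller {m : ℕ} (ε : Fin m → Bool) (a : Fin m) :
    (∀ b < a, signedKey ε a < signedKey ε b) ∨ (∀ b < a, signedKey ε b < signedKey ε a) := by
  cases h : ε a
  · right; intro b hb
    simp only [signedKey, h, Bool.false_eq_true, if_false]
    rw [Fin.lt_def] at hb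
    split_ifs <;> omega
  · left; intro b hb
    simp only [signedKey, h, if_true]
    rw [Fin.lt_def] at hb
    split_ifs <;> omega

noncomputable def signedVote {m : ℕ} (ε : Fin m → Bool) : Vote (Fin m) :=
  voteOfKey (signedKey ε) (signedKey_injective ε)

theorem signedKey_cons_succ_lt_zero_iff {n : ℕ} (σ : Fin n → Bool) (j : Fin n) :
    signedKey (Fin.cons false σ : Fin (n + 1) → Bool) j.succ <
      signedKey (Fin.cons false σ : Fin (n + 1) → Bool) 0 ↔ σ j := by
  cases h : σ j <;>
    simp only [signedKey, Fin.cons_succ, Fin.cons_zero, h, Fin.val_succ, Fin.val_zero,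
      Bool.false_eq_true, if_true, if_false, iff_true, iff_false] <;> omega

theorem signedVote_cons_injective (n : ℕ) :
    Injective fun σ : Fin n → Bool => signedVote (Fin.cons false σ : Fin (n + 1) → Bool) := by
  intro σ τ h
  funext j
  have := congrArg (fun v : Vote (Fin (n + 1)) => v j.succ < v 0) h
  simp only [signedVote, voteOfKey_lt_iff, signedKey_cons_succ_lt_zero_iff] at this
  exact Bool.eq_iff_iff.mpr (iff_of_eq this)

/-- A group-separable profile over `m` alternatives contains at most `2^(m-1)`
pairwise distinct votes, and this bound is tight: for every `m ≥ 2` there is a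
group-separable profile over `m` alternatives with exactly `2^(m-1)` distinct
votes. -/
theorem groupSeparable_distinct_votes_bound :
    (∀ (A : Type) [Fintype A] [DecidableEq A] (n : ℕ) (P : Fin n → Vote A),
      GroupSeparable P → Set.ncard (Set.range P) ≤ 2 ^ (Fintype.card A - 1)) ∧
    (∀ m : ℕ, 2 ≤ m → ∃ (n : ℕ) (P : Fin n → Vote (Fin m)),
      GroupSeparable P ∧ Set.ncard (Set.range P) = 2 ^ (m - 1)) := by
  refine ⟨fun A _ _ n P hP => ncard_range_le_of_groupSeparable hP, fun m hm => ?_⟩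
  obtain ⟨n, rfl⟩ : ∃ n, m = n + 1 := ⟨m - 1, by omega⟩
  let e := Fintype.equivFin (Fin n → Bool)
  refine ⟨_, fun i => signedVote (Fin.cons false (e.symm i)), ?_, ?_⟩
  · refine groupSeparable_of_extreme_among_smaller fun i a => ?_
    simpa only [signedVote, voteOfKey_lt_iff] using signedKey_extreme_among_smaller _ a
  · rw [range_comp' (fun σ => signedVote (Fin.cons false σ)) e.symm, e.symm.surjective.range_eq,
      image_univ, ncard_range_of_injective (signedVote_cons_injective n)]
    simp
end
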